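/- arXiv:quant-ph/0303088 — 3 statements merged into one kernel-verified Lean document; each statement's English description precedes it below -/
import Mathlib

section
/- Let d ≥ 2 and let U₁ be a d×d unitary matrix with |⟨i|U₁|k⟩| = 1/√d for all i, k (i.e., U₁ maps the computational basis to a mutually unbiased basis), and U₀ = I. For any unit vector |φ⟩ in ℂ^d, the sum over t ∈ {0,1} and k ∈ {0,…,d−1} of −|⟨φ|U_t|k⟩|² log₂|⟨φ|U_t|k⟩|² is at least log₂ d. Equivalently, the sum of the Shannon entropies of the measurement outcome distributions of |φ⟩ in the computational basis and in the conjugate basis is at least log₂ d. -/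
open scoped BigOperators Classical ComplexOrder
open Matrix Kronecker

noncomputable section

/-- Shannon entropy (base 2) of a finitely supported nonnegative function. -/
def H2 {α : Type} [Fintype α] (p : α → ℝ) : ℝ := ∑ x, -(p x * Real.logb 2 (p x))

/-- Marginal on the first factor. -/
def margA {α β : Type} [Fintype α] [Fintype β] (p : α × β → ℝ) : α → ℝ :=
  fun a => ∑ b, p (a, b)

/-- Marginal on the second factor. -/
def margB {α β : Type} [Fintype α] [Fintype β] (p : α × β → ℝ) : β → ℝ :=
  fun b => ∑ a, p (a, b)

/-- Classical mutual information (base 2) of a joint distribution. -/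
def mi {α β : Type} [Fintype α] [Fintype β] (p : α × β → ℝ) : ℝ :=
  H2 (margA p) + H2 (margB p) - H2 p

/-- Kullback–Leibler divergence in bits. -/
def klDiv {α : Type} [Fintype α] (ν μ : α → ℝ) : ℝ :=
  ∑ x, ν x * Real.logb 2 (ν x / μ x)

/-- ℓ₁ distance between two functions. -/
def l1 {α : Type} [Fintype α] (ν μ : α → ℝ) : ℝ := ∑ x, |ν x - μ x|

/-- `p` is a probability distribution. -/
def IsProb {α : Type} [Fintype α] (p : α → ℝ) : Prop :=
  (∀ x, 0 ≤ p x) ∧ ∑ x, p x = 1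

/-- Probability of an event. -/
def prE {Ω : Type} [Fintype Ω] (p : Ω → ℝ) (E : Ω → Prop) : ℝ :=
  ∑ ω, if E ω then p ω else 0

/-- Conditional distribution given an event. -/
def condP {Ω : Type} [Fintype Ω] (p : Ω → ℝ) (E : Ω → Prop) : Ω → ℝ :=
  fun ω => if E ω then p ω / prE p E else 0

/-- Distribution of a random variable. -/
def distOf {Ω α : Type} [Fintype Ω] (p : Ω → ℝ) (X : Ω → α) : α → ℝ :=
  fun x => prE p (fun ω => X ω = x)

/-- Joint distribution of a pair of random variables. -/
def jointOf {Ω α β : Type} [Fintype Ω] (p : Ω → ℝ) (X : Ω → α) (Y : Ω → β)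
    [Fintype α] [Fintype β] : α × β → ℝ :=
  fun xy => prE p (fun ω => X ω = xy.1 ∧ Y ω = xy.2)

/-- Mutual information between two random variables on a finite probability space. -/
def miRV {Ω α β : Type} [Fintype Ω] [Fintype α] [Fintype β]
    (p : Ω → ℝ) (X : Ω → α) (Y : Ω → β) : ℝ :=
  mi (jointOf p X Y)



/-- A density matrix: positive semidefinite with unit trace. -/
def IsDensity {n : Type} [Fintype n] [DecidableEq n] (ρ : Matrix n n ℂ) : Prop :=
  ρ.PosSemidef ∧ ρ.trace = 1

/-- A POVM: positive semidefinite elements summing to the identity. -/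
def IsPOVM {n ι : Type} [Fintype n] [DecidableEq n] [Fintype ι]
    (M : ι → Matrix n n ℂ) : Prop :=
  (∀ i, (M i).PosSemidef) ∧ ∑ i, M i = 1

/-- Partial trace over the second (Bob) factor: Alice's reduced state. -/
def trOutB {A B : Type} [Fintype A] [Fintype B]
    (ρ : Matrix (A × B) (A × B) ℂ) : Matrix A A ℂ :=
  Matrix.of fun a a' => ∑ b, ρ (a, b) (a', b)

/-- Partial trace over the first (Alice) factor: Bob's reduced state. -/
def trOutA {A B : Type} [Fintype A] [Fintype B]
    (ρ : Matrix (A × B) (A × B) ℂ) : Matrix B B ℂ :=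
  Matrix.of fun b b' => ∑ a, ρ (a, b) (a, b')

/-- von Neumann entropy in bits (via the eigenvalues of a Hermitian matrix). -/
def vN {n : Type} [Fintype n] [DecidableEq n] (ρ : Matrix n n ℂ) : ℝ :=
  if h : ρ.IsHermitian then ∑ i, -(h.eigenvalues i * Real.logb 2 (h.eigenvalues i)) else 0

/-- Quantum mutual information `S(ρ_A) + S(ρ_B) − S(ρ_AB)` in bits. -/
def Iq {A B : Type} [Fintype A] [DecidableEq A] [Fintype B] [DecidableEq B]
    (ρ : Matrix (A × B) (A × B) ℂ) : ℝ :=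
  vN (trOutB ρ) + vN (trOutA ρ) - vN ρ

/-- Trace norm (sum of singular values). -/
def traceNorm {n : Type} [Fintype n] [DecidableEq n] (M : Matrix n n ℂ) : ℝ :=
  ∑ i, Real.sqrt ((Matrix.posSemidef_conjTranspose_mul_self M).1.eigenvalues i)

/-- Outcome distribution of a local measurement `M_A ⊗ M_B` on a bipartite state. -/
def outcomeProb {A B J K : Type} [Fintype A] [Fintype B] [Fintype J] [Fintype K]
    (ρ : Matrix (A × B) (A × B) ℂ)
    (MA : J → Matrix A A ℂ) (MB : K → Matrix B B ℂ) : J × K → ℝ :=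
  fun jk => ((MA jk.1 ⊗ₖ MB jk.2) * ρ).trace.re

/-- The set of classical mutual informations achievable by local POVMs. -/
def IcSet {A B : Type} [Fintype A] [DecidableEq A] [Fintype B] [DecidableEq B]
    (ρ : Matrix (A × B) (A × B) ℂ) : Set ℝ :=
  {r | ∃ (J K : Type) (_ : Fintype J) (_ : Fintype K)
        (MA : J → Matrix A A ℂ) (MB : K → Matrix B B ℂ),
        IsPOVM MA ∧ IsPOVM MB ∧ r = mi (outcomeProb ρ MA MB)}

/-- Maximal classical mutual information obtainable by local measurements. -/
def Ic {A B : Type} [Fintype A] [DecidableEq A] [Fintype B] [DecidableEq B]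
    (ρ : Matrix (A × B) (A × B) ℂ) : ℝ :=
  sSup (IcSet ρ)

/-- Rank-one projector (outer product) `|v⟩⟨v|`. -/
def outer {n : Type} [Fintype n] (v : n → ℂ) : Matrix n n ℂ :=
  Matrix.of fun i i' => v i * star (v i')

/-- The expectation `⟨φ|M|φ⟩` (real part). -/
def qexp {n : Type} [Fintype n] (φ : n → ℂ) (M : Matrix n n ℂ) : ℝ :=
  (∑ i, ∑ i', star (φ i) * M i i' * φ i').re

/-- The set of mutual informations between the ensemble label and the outcome of a POVM. -/
def IaccSet {n I : Type} [Fintype n] [DecidableEq n] [Fintype I]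
    (p : I → ℝ) (η : I → Matrix n n ℂ) : Set ℝ :=
  {r | ∃ (J : Type) (_ : Fintype J) (M : J → Matrix n n ℂ), IsPOVM M ∧
        r = mi (fun ij : I × J => p ij.1 * ((M ij.2) * (η ij.1)).trace.re)}

/-- Accessible information of an ensemble. -/
def Iacc {n I : Type} [Fintype n] [DecidableEq n] [Fintype I]
    (p : I → ℝ) (η : I → Matrix n n ℂ) : ℝ :=
  sSup (IaccSet p η)

/-- Matrix logarithm (base 2) of a Hermitian matrix, via spectral decomposition. -/
def matLog {n : Type} [Fintype n] [DecidableEq n] (M : Matrix n n ℂ) : Matrix n n ℂ :=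
  if h : M.IsHermitian then
    (h.eigenvectorUnitary : Matrix n n ℂ) *
      Matrix.diagonal (fun i => (Real.logb 2 (h.eigenvalues i) : ℂ)) *
      star (h.eigenvectorUnitary : Matrix n n ℂ)
  else 0

/-- Quantum relative entropy `Tr ν log₂ ν − Tr ν log₂ μ`. -/
def qRelEnt {n : Type} [Fintype n] [DecidableEq n] (ν μ : Matrix n n ℂ) : ℝ :=
  ((ν * matLog ν).trace - (ν * matLog μ).trace).re

lemma normsq_eq_re_mul_star (z : ℂ) : ‖z‖ ^ 2 = (z * star z).re := by
  rw [Complex.star_def, Complex.mul_conj, Complex.ofReal_re, Complex.normSq_eq_norm_sq]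

lemma parseval (d : ℕ) (U : Matrix (Fin d) (Fin d) ℂ)
    (hU : U ∈ Matrix.unitaryGroup (Fin d) ℂ) (v : Fin d → ℂ) :
    ∑ l, ‖∑ k, v k * U k l‖ ^ 2 = ∑ k, ‖v k‖ ^ 2 := by
  have hUU : U * star U = 1 := (Matrix.mem_unitaryGroup_iff.mp hU)
  have key : ∑ l, ((∑ k, v k * U k l) * star (∑ k, v k * U k l))
      = ∑ k, (v k * star (v k)) := by
    have expand : ∀ l, (∑ k, v k * U k l) * star (∑ k, v k * U k l)
        = ∑ k, ∑ j, v k * star (v j) * (U k l * star (U j l)) := by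
      intro l
      rw [star_sum, Finset.sum_mul_sum]
      apply Finset.sum_congr rfl; intro k _
      apply Finset.sum_congr rfl; intro j _
      simp only [star_mul']
      ring
    calc ∑ l, ((∑ k, v k * U k l) * star (∑ k, v k * U k l))
        = ∑ l, ∑ k, ∑ j, v k * star (v j) * (U k l * star (U j l)) := by
          exact Finset.sum_congr rfl fun l _ => expand l
      _ = ∑ k, ∑ j, ∑ l, v k * star (v j) * (U k l * star (U j l)) := by
          rw [Finset.sum_comm]
          exact Finset.sum_congr rfl fun k _ => Finset.sum_comm
      _ = ∑ k, ∑ j, v k * star (v j) * (U * star U) k j := by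
          apply Finset.sum_congr rfl; intro k _
          apply Finset.sum_congr rfl; intro j _
          rw [Matrix.mul_apply, Finset.mul_sum]
          apply Finset.sum_congr rfl; intro l _
          simp [Matrix.star_apply]
      _ = ∑ k, (v k * star (v k)) := by
          rw [hUU]
          apply Finset.sum_congr rfl; intro k _
          simp [Matrix.one_apply]
  have := congrArg Complex.re key
  rw [Complex.re_sum, Complex.re_sum] at this
  simp only [← normsq_eq_re_mul_star] at this
  exact this

/-- bound `B ^ e ≤ B ^ lo + B ^ hi` for `lo ≤ e ≤ hi`, `B ≥ 0`. -/
lemma rpow_bound {B e lo hi : ℝ} (hB : 0 ≤ B) (hlo : 0 < lo) (h1 : lo ≤ e) (h2 : e ≤ hi) :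
    B ^ e ≤ B ^ lo + B ^ hi := by
  rcases eq_or_lt_of_le hB with h | h
  · rw [← h, Real.zero_rpow (ne_of_gt (lt_of_lt_of_le hlo h1))]
    positivity
  · rcases le_total B 1 with hb | hb
    · have : B ^ e ≤ B ^ lo := Real.rpow_le_rpow_of_exponent_ge h hb h1
      have h0 : 0 ≤ B ^ hi := Real.rpow_nonneg hB _
      linarith
    · have : B ^ e ≤ B ^ hi := Real.rpow_le_rpow_of_exponent_le hb h2
      have h0 : 0 ≤ B ^ lo := Real.rpow_nonneg hB _
      linarith

/-- Cauchy–Schwarz, sqrt form. -/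
lemma cs_sqrt {n : ℕ} (f g : Fin n → ℝ) (hf : ∀ i, 0 ≤ f i) (hg : ∀ i, 0 ≤ g i) :
    ∑ i, f i * g i ≤ Real.sqrt (∑ i, f i ^ 2) * Real.sqrt (∑ i, g i ^ 2) := by
  have h := Finset.sum_mul_sq_le_sq_mul_sq Finset.univ f g
  have h1 : 0 ≤ ∑ i, f i * g i := Finset.sum_nonneg fun i _ => mul_nonneg (hf i) (hg i)
  calc ∑ i, f i * g i = Real.sqrt ((∑ i, f i * g i) ^ 2) := by rw [Real.sqrt_sq h1]
    _ ≤ Real.sqrt ((∑ i, f i ^ 2) * (∑ i, g i ^ 2)) := Real.sqrt_le_sqrt h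
    _ = Real.sqrt (∑ i, f i ^ 2) * Real.sqrt (∑ i, g i ^ 2) := Real.sqrt_mul
        (Finset.sum_nonneg fun i _ => sq_nonneg _) _

lemma rpow_npow2 (x : ℝ) (hx : 0 ≤ x) (e : ℝ) : (x ^ e) ^ (2:ℕ) = x ^ (2*e) := by
  rw [← Real.rpow_natCast (x ^ e) 2, ← Real.rpow_mul hx, mul_comm]
  norm_num

lemma hasDerivAt_rpow_param {x : ℝ} (hx : 0 ≤ x) {c : ℝ → ℝ} {c' τ : ℝ}
    (hc : HasDerivAt c c' τ) (h0 : c τ ≠ 0) (hcont : ∀ᶠ s in nhds τ, c s ≠ 0) :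
    HasDerivAt (fun s => x ^ (c s)) (c' * x ^ (c τ) * Real.log x) τ := by
  rcases eq_or_lt_of_le hx with h | h
  · have hev : (fun s => x ^ (c s)) =ᶠ[nhds τ] (fun _ => (0:ℝ)) := by
      filter_upwards [hcont] with s hs
      rw [← h, Real.zero_rpow hs]
    have hzero : HasDerivAt (fun _ : ℝ => (0:ℝ)) 0 τ := hasDerivAt_const _ _
    have hder := hzero.congr_of_eventuallyEq hev
    refine hder.congr_deriv ?_
    rw [← h, Real.zero_rpow h0]
    ring
  · have heq : (fun s => x ^ (c s)) = (fun s => Real.exp (Real.log x * c s)) :=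
      funext fun s => Real.rpow_def_of_pos h _
    have hd : HasDerivAt (fun s => Real.exp (Real.log x * c s))
        (Real.exp (Real.log x * c τ) * (Real.log x * c')) τ :=
      (hc.const_mul (Real.log x)).exp
    rw [heq]
    convert hd using 1
    rw [Real.rpow_def_of_pos h]
    ring

lemma claimB (d : ℕ) (hd : 2 ≤ d) (U : Matrix (Fin d) (Fin d) ℂ)
    (hU : U ∈ Matrix.unitaryGroup (Fin d) ℂ)
    (hmub : ∀ i k, ‖U i k‖ = 1 / Real.sqrt d)
    (φ : Fin d → ℂ) (hφ : ∑ i, ‖φ i‖ ^ 2 = 1) (t : ℝ) (ht : t ∈ Set.Ioo (0:ℝ) 1) :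
    (1-t)/2 * Real.log (∑ l, ((‖∑ i, star (φ i) * U i l‖ ^ 2 : ℝ) ^ ((1:ℝ)/(1-t))))
      ≤ -(t/2) * Real.log d
        + (1+t)/2 * Real.log (∑ k, ((‖φ k‖ ^ 2 : ℝ) ^ ((1:ℝ)/(1+t)))) := by
  obtain ⟨ht0, ht1⟩ := ht
  have h1t : (0:ℝ) < 1 - t := by linarith
  have h1t' : (0:ℝ) < 1 + t := by linarith
  set c1 : ℝ := 1/(1+t) with hc1_def
  have hc1 : 0 < c1 := by positivity
  set b : Fin d → ℂ := fun l => ∑ i, star (φ i) * U i l with hb_def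
  set q : Fin d → ℝ := fun l => ‖b l‖ ^ 2 with hq_def
  set p : Fin d → ℝ := fun k => ‖φ k‖ ^ 2 with hp_def
  have hq1 : ∑ l, q l = 1 := by
    have h2 := parseval d U hU (fun i => star (φ i))
    simp only [norm_star] at h2
    exact h2.trans hφ
  set S : ℝ := ∑ l, (q l) ^ ((1:ℝ)/(1-t)) with hS_def
  set T : ℝ := ∑ k, (p k) ^ ((1:ℝ)/(1+t)) with hT_def
  have hdpos : (0:ℝ) < d := by
    have : (0:ℕ) < d := lt_of_lt_of_le (by norm_num) hd
    exact_mod_cast this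
  have hSpos : 0 < S := by
    obtain ⟨l0, hl0⟩ : ∃ l, q l ≠ 0 := by
      by_contra hc
      push_neg at hc
      have h0 : ∑ l, q l = 0 := Finset.sum_eq_zero fun l _ => hc l
      exact one_ne_zero (h0.symm.trans hq1).symm
    have hql0 : 0 < q l0 := lt_of_le_of_ne (by positivity) (Ne.symm hl0)
    exact Finset.sum_pos' (fun l _ => Real.rpow_nonneg (by positivity) _)
      ⟨l0, Finset.mem_univ _, Real.rpow_pos_of_pos hql0 _⟩
  have hTpos : 0 < T := by
    obtain ⟨k0, hk0⟩ : ∃ k, p k ≠ 0 := by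
      by_contra hc
      push_neg at hc
      have h0 : ∑ k, p k = 0 := Finset.sum_eq_zero fun k _ => hc k
      exact one_ne_zero (h0.symm.trans hφ).symm
    have hpk0 : 0 < p k0 := lt_of_le_of_ne (by positivity) (Ne.symm hk0)
    exact Finset.sum_pos' (fun k _ => Real.rpow_nonneg (by positivity) _)
      ⟨k0, Finset.mem_univ _, Real.rpow_pos_of_pos hpk0 _⟩
  -- the analytic family
  set r : Fin d → ℝ := fun l => ‖b l‖ ^ ((1+t)/(1-t)) with hr_def
  set A : Fin d → ℂ → ℂ := fun k z =>
    if φ k = 0 then 0 else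
      Complex.exp (((c1 * Real.log ‖φ k‖ : ℝ) : ℂ) * (1+z)) * (star (φ k) / (‖φ k‖ : ℂ))
    with hA_def
  set Y : Fin d → ℂ → ℂ := fun l z =>
    if b l = 0 then 0 else
      Complex.exp (((c1 * Real.log (r l) : ℝ) : ℂ) * (1+z)) * (star (b l) / (‖b l‖ : ℂ))
    with hY_def
  set g : ℂ → ℂ := fun z => ∑ l, (∑ k, A k z * U k l) * Y l z with hg_def
  have hAnorm : ∀ k (z : ℂ), 0 ≤ z.re → ‖A k z‖ = ‖φ k‖ ^ (c1 * (1 + z.re)) := by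
    intro k z hz
    by_cases h : φ k = 0
    · rw [hA_def]
      simp only [h, if_true]
      rw [norm_zero, Real.zero_rpow
        (ne_of_gt (mul_pos hc1 (by linarith)))]
    · rw [hA_def]
      simp only [h, if_false]
      have hnk : (0:ℝ) < ‖φ k‖ := norm_pos_iff.mpr h
      rw [norm_mul, Complex.norm_exp]
      have hre : (((c1 * Real.log ‖φ k‖ : ℝ) : ℂ) * (1+z)).re
          = (c1 * Real.log ‖φ k‖) * (1 + z.re) := by
        simp [Complex.ofReal_mul, Complex.add_re]
      rw [hre]
      have hphase : ‖star (φ k) / (‖φ k‖ : ℂ)‖ = 1 := by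
        rw [norm_div, norm_star, Complex.norm_real, Real.norm_of_nonneg (norm_nonneg _)]
        exact div_self hnk.ne'
      rw [hphase, mul_one, Real.rpow_def_of_pos hnk]
      ring_nf
  have hrpos : ∀ l, b l ≠ 0 → 0 < r l := fun l h =>
    Real.rpow_pos_of_pos (norm_pos_iff.mpr h) _
  have hYnorm : ∀ l (z : ℂ), 0 ≤ z.re → ‖Y l z‖ = (r l) ^ (c1 * (1 + z.re)) := by
    intro l z hz
    by_cases h : b l = 0
    · rw [hY_def]
      simp only [h, if_true]
      have : r l = 0 := by
        rw [hr_def]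
        simp only [h, norm_zero]
        rw [Real.zero_rpow (by positivity)]
      rw [this, norm_zero, Real.zero_rpow
        (ne_of_gt (mul_pos hc1 (by linarith)))]
    · rw [hY_def]
      simp only [h, if_false]
      have hnl : (0:ℝ) < ‖b l‖ := norm_pos_iff.mpr h
      rw [norm_mul, Complex.norm_exp]
      have hre : (((c1 * Real.log (r l) : ℝ) : ℂ) * (1+z)).re
          = (c1 * Real.log (r l)) * (1 + z.re) := by
        simp [Complex.ofReal_mul, Complex.add_re]
      rw [hre]
      have hphase : ‖star (b l) / (‖b l‖ : ℂ)‖ = 1 := by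
        rw [norm_div, norm_star, Complex.norm_real, Real.norm_of_nonneg (norm_nonneg _)]
        exact div_self hnl.ne'
      rw [hphase, mul_one, Real.rpow_def_of_pos (hrpos l h)]
      ring_nf
  -- power bookkeeping
  have hq_rpow : ∀ l, (r l) ^ (2*c1) = q l ^ ((1:ℝ)/(1-t)) := by
    intro l
    show (‖b l‖ ^ ((1+t)/(1-t))) ^ (2*c1) = (‖b l‖ ^ (2:ℕ)) ^ ((1:ℝ)/(1-t))
    rw [← Real.rpow_natCast ‖b l‖ 2, ← Real.rpow_mul (norm_nonneg _),
      ← Real.rpow_mul (norm_nonneg _)]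
    congr 1
    try rw [hc1_def]
    try field_simp
    try ring
  have hp_rpow : ∀ k, (‖φ k‖ : ℝ) ^ (2*c1) = p k ^ ((1:ℝ)/(1+t)) := by
    intro k
    show (‖φ k‖ : ℝ) ^ (2*c1) = (‖φ k‖ ^ (2:ℕ)) ^ ((1:ℝ)/(1+t))
    rw [← Real.rpow_natCast ‖φ k‖ 2, ← Real.rpow_mul (norm_nonneg _)]
    congr 1
    try rw [hc1_def]
    try field_simp
    try ring
  -- sums at the left boundary
  have hsumA0 : ∀ z : ℂ, z.re = 0 → ∑ k, ‖A k z‖ ^ 2 = T := by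
    intro z h0
    rw [hT_def]
    apply Finset.sum_congr rfl
    intro k _
    rw [hAnorm k z (le_of_eq h0.symm), h0,
      show c1 * (1 + (0:ℝ)) = c1 from by ring,
      rpow_npow2 _ (norm_nonneg _), hp_rpow k]
  have hsumY0 : ∀ z : ℂ, z.re = 0 → ∑ l, ‖Y l z‖ ^ 2 = S := by
    intro z h0
    rw [hS_def]
    apply Finset.sum_congr rfl
    intro l _
    rw [hYnorm l z (le_of_eq h0.symm), h0,
      show c1 * (1 + (0:ℝ)) = c1 from by ring,
      rpow_npow2 _ (Real.rpow_nonneg (norm_nonneg _) _), hq_rpow l]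
  -- boundary bound on the line Re z = 0
  have hbound0 : ∀ z : ℂ, z.re = 0 → ‖g z‖ ≤ Real.sqrt T * Real.sqrt S := by
    intro z h0
    calc ‖g z‖ ≤ ∑ l, ‖(∑ k, A k z * U k l) * Y l z‖ := norm_sum_le _ _
      _ = ∑ l, ‖∑ k, A k z * U k l‖ * ‖Y l z‖ := by
          exact Finset.sum_congr rfl fun l _ => norm_mul _ _
      _ ≤ Real.sqrt (∑ l, ‖∑ k, A k z * U k l‖ ^ 2) * Real.sqrt (∑ l, ‖Y l z‖ ^ 2) :=
          cs_sqrt _ _ (fun _ => norm_nonneg _) (fun _ => norm_nonneg _)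
      _ = Real.sqrt T * Real.sqrt S := by
          rw [parseval d U hU (fun k => A k z), hsumA0 z h0, hsumY0 z h0]
  -- boundary bound on the line Re z = 1
  have hbound1 : ∀ z : ℂ, z.re = 1 → ‖g z‖ ≤ 1 / Real.sqrt d * T * S := by
    intro z h1
    have hz0 : (0:ℝ) ≤ z.re := by rw [h1]; norm_num
    have hAn : ∀ k, ‖A k z‖ = p k ^ ((1:ℝ)/(1+t)) := by
      intro k
      rw [hAnorm k z hz0, h1,
        show c1 * (1 + (1:ℝ)) = 2 * c1 from by ring, hp_rpow k]
    have hYn : ∀ l, ‖Y l z‖ = q l ^ ((1:ℝ)/(1-t)) := by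
      intro l
      rw [hYnorm l z hz0, h1,
        show c1 * (1 + (1:ℝ)) = 2 * c1 from by ring, hq_rpow l]
    have hrow : ∀ l, ‖∑ k, A k z * U k l‖ ≤ 1 / Real.sqrt d * T := by
      intro l
      calc ‖∑ k, A k z * U k l‖ ≤ ∑ k, ‖A k z * U k l‖ := norm_sum_le _ _
        _ = ∑ k, ‖A k z‖ * (1 / Real.sqrt d) := by
            exact Finset.sum_congr rfl fun k _ => by rw [norm_mul, hmub k l]
        _ = 1 / Real.sqrt d * T := by
            rw [← Finset.sum_mul, hT_def, mul_comm]
            congr 1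
            exact Finset.sum_congr rfl fun k _ => hAn k
    calc ‖g z‖ ≤ ∑ l, ‖(∑ k, A k z * U k l) * Y l z‖ := norm_sum_le _ _
      _ = ∑ l, ‖∑ k, A k z * U k l‖ * ‖Y l z‖ := by
          exact Finset.sum_congr rfl fun l _ => norm_mul _ _
      _ ≤ ∑ l, (1 / Real.sqrt d * T) * ‖Y l z‖ := by
          apply Finset.sum_le_sum
          intro l _
          exact mul_le_mul_of_nonneg_right (hrow l) (norm_nonneg _)
      _ = 1 / Real.sqrt d * T * S := by
          rw [← Finset.mul_sum, hS_def]
          congr 1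
          exact Finset.sum_congr rfl fun l _ => hYn l
  -- differentiability
  have hAd : ∀ k, Differentiable ℂ (A k) := by
    intro k
    rw [hA_def]
    by_cases h : φ k = 0
    · simp only [h, if_true]
      exact differentiable_const 0
    · simp only [h, if_false]
      apply Differentiable.mul _ (differentiable_const _)
      apply Differentiable.cexp
      exact (differentiable_const _).mul ((differentiable_const _).add differentiable_id)
  have hYd : ∀ l, Differentiable ℂ (Y l) := by
    intro l
    rw [hY_def]
    by_cases h : b l = 0
    · simp only [h, if_true]
      exact differentiable_const 0
    · simp only [h, if_false]
      apply Differentiable.mul _ (differentiable_const _)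
      apply Differentiable.cexp
      exact (differentiable_const _).mul ((differentiable_const _).add differentiable_id)
  have hgdiff : Differentiable ℂ g := by
    rw [hg_def]
    apply Differentiable.fun_sum
    intro l _
    exact (Differentiable.fun_sum fun k _ => (hAd k).mul (differentiable_const _)).mul (hYd l)
  -- boundedness on the strip
  have hBdd : BddAbove ((norm ∘ g) ''
      (Complex.HadamardThreeLines.verticalClosedStrip 0 1)) := by
    refine ⟨(∑ k, (‖φ k‖ ^ c1 + ‖φ k‖ ^ (2*c1))) * (∑ l, ((r l) ^ c1 + (r l) ^ (2*c1))), ?_⟩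
    rintro y ⟨z, hz, rfl⟩
    have hz' : z.re ∈ Set.Icc (0:ℝ) 1 := hz
    have hU1 : ∀ k l, ‖U k l‖ ≤ 1 := by
      intro k l
      rw [hmub k l]
      rw [div_le_one (Real.sqrt_pos.mpr hdpos)]
      rw [show (1:ℝ) = Real.sqrt 1 by simp]
      apply Real.sqrt_le_sqrt
      exact_mod_cast le_trans (by norm_num) hd
    have hA_le : ∀ k, ‖A k z‖ ≤ ‖φ k‖ ^ c1 + ‖φ k‖ ^ (2*c1) := by
      intro k
      rw [hAnorm k z hz'.1]
      exact rpow_bound (norm_nonneg _) hc1 (by nlinarith [hz'.1, hc1]) (by nlinarith [hz'.2, hc1])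
    have hY_le : ∀ l, ‖Y l z‖ ≤ (r l) ^ c1 + (r l) ^ (2*c1) := by
      intro l
      rw [hYnorm l z hz'.1]
      exact rpow_bound (Real.rpow_nonneg (norm_nonneg _) _) hc1
        (by nlinarith [hz'.1, hc1]) (by nlinarith [hz'.2, hc1])
    have hrow : ∀ l, ‖∑ k, A k z * U k l‖ ≤ ∑ k, (‖φ k‖ ^ c1 + ‖φ k‖ ^ (2*c1)) := by
      intro l
      calc ‖∑ k, A k z * U k l‖ ≤ ∑ k, ‖A k z * U k l‖ := norm_sum_le _ _
        _ ≤ ∑ k, (‖φ k‖ ^ c1 + ‖φ k‖ ^ (2*c1)) := by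
            apply Finset.sum_le_sum
            intro k _
            rw [norm_mul]
            calc ‖A k z‖ * ‖U k l‖ ≤ ‖A k z‖ * 1 :=
                  mul_le_mul_of_nonneg_left (hU1 k l) (norm_nonneg _)
              _ = ‖A k z‖ := mul_one _
              _ ≤ _ := hA_le k
    calc ‖g z‖ ≤ ∑ l, ‖(∑ k, A k z * U k l) * Y l z‖ := norm_sum_le _ _
      _ = ∑ l, ‖∑ k, A k z * U k l‖ * ‖Y l z‖ := by
          exact Finset.sum_congr rfl fun l _ => norm_mul _ _
      _ ≤ ∑ l, (∑ k, (‖φ k‖ ^ c1 + ‖φ k‖ ^ (2*c1))) * ((r l) ^ c1 + (r l) ^ (2*c1)) := by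
          apply Finset.sum_le_sum
          intro l _
          apply mul_le_mul (hrow l) (hY_le l) (norm_nonneg _)
          apply Finset.sum_nonneg
          intro k _
          positivity
      _ = _ := by rw [← Finset.mul_sum]
  -- value at z = t
  have hAt : ∀ k, A k (t:ℂ) = star (φ k) := by
    intro k
    rw [hA_def]
    by_cases h : φ k = 0
    · simp [h]
    · simp only [h, if_false]
      have hnk : (0:ℝ) < ‖φ k‖ := norm_pos_iff.mpr h
      have he : (c1 * Real.log ‖φ k‖) * (1+t) = Real.log ‖φ k‖ := by
        rw [hc1_def]; field_simp
      have hcast : ((c1 * Real.log ‖φ k‖ : ℝ) : ℂ) * (1 + (t:ℂ))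
          = ((Real.log ‖φ k‖ : ℝ) : ℂ) := by
        rw [show (1 + (t:ℂ)) = (((1 + t : ℝ)) : ℂ) by push_cast; ring,
          ← Complex.ofReal_mul, he]
      rw [hcast, ← Complex.ofReal_exp, Real.exp_log hnk]
      rw [mul_comm, div_mul_cancel₀]
      exact Complex.ofReal_ne_zero.mpr hnk.ne'
  have hterm : ∀ l, (∑ k, A k (t:ℂ) * U k l) * Y l (t:ℂ)
      = ((q l ^ ((1:ℝ)/(1-t)) : ℝ) : ℂ) := by
    intro l
    have hsum : (∑ k, A k (t:ℂ) * U k l) = b l := by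
      rw [hb_def]
      exact Finset.sum_congr rfl fun k _ => by rw [hAt k]
    rw [hsum, hY_def]
    by_cases h : b l = 0
    · have hql : q l = 0 := by rw [hq_def]; simp [h]
      simp only [h, if_true, mul_zero]
      rw [hql, Real.zero_rpow (ne_of_gt (by positivity))]
      simp
    · simp only [h, if_false]
      have hnl : (0:ℝ) < ‖b l‖ := norm_pos_iff.mpr h
      have he : (c1 * Real.log (r l)) * (1+t) = Real.log (r l) := by
        rw [hc1_def]; field_simp
      have hcast : ((c1 * Real.log (r l) : ℝ) : ℂ) * (1 + (t:ℂ))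
          = ((Real.log (r l) : ℝ) : ℂ) := by
        rw [show (1 + (t:ℂ)) = (((1 + t : ℝ)) : ℂ) by push_cast; ring,
          ← Complex.ofReal_mul, he]
      rw [hcast, ← Complex.ofReal_exp, Real.exp_log (hrpos l h)]
      have hbb : b l * star (b l) = ((‖b l‖ ^ 2 : ℝ) : ℂ) := by
        rw [Complex.star_def, Complex.mul_conj, Complex.normSq_eq_norm_sq]
      have hreal : r l * ‖b l‖ = q l ^ ((1:ℝ)/(1-t)) := by
        show ‖b l‖ ^ ((1+t)/(1-t)) * ‖b l‖ = (‖b l‖ ^ (2:ℕ)) ^ ((1:ℝ)/(1-t))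
        rw [← Real.rpow_natCast ‖b l‖ 2, ← Real.rpow_mul (norm_nonneg _),
          ← Real.rpow_add_one hnl.ne']
        congr 1
        push_cast
        field_simp
        ring
      have hbb' : b l * star (b l) = (↑‖b l‖ : ℂ) * (↑‖b l‖ : ℂ) := by
        rw [hbb]
        push_cast
        ring
      calc b l * ((↑(r l) : ℂ) * (star (b l) / (↑‖b l‖ : ℂ)))
          = (b l * star (b l)) * (↑(r l) : ℂ) / (↑‖b l‖ : ℂ) := by ring
        _ = (↑‖b l‖ : ℂ) * (↑‖b l‖ : ℂ) * (↑(r l) : ℂ) / (↑‖b l‖ : ℂ) := by rw [hbb']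
        _ = (↑(r l) : ℂ) * (↑‖b l‖ : ℂ) := by
            rw [mul_right_comm, mul_div_cancel_right₀ _ (Complex.ofReal_ne_zero.mpr hnl.ne'),
              mul_comm]
        _ = ((r l * ‖b l‖ : ℝ) : ℂ) := by push_cast; rfl
        _ = ((q l ^ ((1:ℝ)/(1-t)) : ℝ) : ℂ) := by rw [hreal]
  have hgt : ‖g (t:ℂ)‖ = S := by
    have : g (t:ℂ) = ((S:ℝ):ℂ) := by
      rw [hg_def, hS_def]
      simp only
      rw [Finset.sum_congr rfl fun l _ => hterm l]
      push_cast
      rfl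
    rw [this, Complex.norm_real, Real.norm_of_nonneg hSpos.le]
  -- apply Hadamard three lines
  have hmem : (t:ℂ) ∈ Complex.HadamardThreeLines.verticalClosedStrip 0 1 := by
    show (t:ℂ).re ∈ Set.Icc (0:ℝ) 1
    rw [Complex.ofReal_re]
    exact ⟨ht0.le, ht1.le⟩
  have h3 := Complex.HadamardThreeLines.norm_le_interp_of_mem_verticalClosedStrip₀₁' g
    hmem (hgdiff.diffContOnCl) hBdd
    (fun z hz => hbound0 z hz)
    (fun z hz => hbound1 z hz)
  rw [hgt, Complex.ofReal_re] at h3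
  -- take logarithms
  have hTS : (0:ℝ) < Real.sqrt T * Real.sqrt S :=
    mul_pos (Real.sqrt_pos.mpr hTpos) (Real.sqrt_pos.mpr hSpos)
  have hB1 : (0:ℝ) < 1 / Real.sqrt d * T * S := by
    apply mul_pos (mul_pos _ hTpos) hSpos
    rw [one_div]
    exact inv_pos.mpr (Real.sqrt_pos.mpr hdpos)
  have hlog := Real.log_le_log hSpos h3
  rw [Real.log_mul (ne_of_gt (Real.rpow_pos_of_pos hTS _))
    (ne_of_gt (Real.rpow_pos_of_pos hB1 _)),
    Real.log_rpow hTS, Real.log_rpow hB1,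
    Real.log_mul (ne_of_gt (Real.sqrt_pos.mpr hTpos)) (ne_of_gt (Real.sqrt_pos.mpr hSpos)),
    Real.log_sqrt hTpos.le, Real.log_sqrt hSpos.le,
    Real.log_mul (ne_of_gt (mul_pos (by positivity : (0:ℝ) < 1 / Real.sqrt d) hTpos))
      (ne_of_gt hSpos),
    Real.log_mul (by positivity : (1:ℝ) / Real.sqrt d ≠ 0) (ne_of_gt hTpos),
    one_div, Real.log_inv, Real.log_sqrt hdpos.le] at hlog
  show (1-t)/2 * Real.log S ≤ -(t/2) * Real.log ↑d + (1+t)/2 * Real.log T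
  nlinarith [hlog]

/-- Maassen–Uffink entropic uncertainty relation for a pair of mutually
unbiased bases: the two measurement entropies of a unit vector sum to at least `log₂ d`. -/
theorem stmt_5 (d : ℕ) (hd : 2 ≤ d) (U : Matrix (Fin d) (Fin d) ℂ)
    (hU : U ∈ Matrix.unitaryGroup (Fin d) ℂ)
    (hmub : ∀ i k, ‖U i k‖ = 1 / Real.sqrt d)
    (φ : Fin d → ℂ) (hφ : ∑ i, ‖φ i‖ ^ 2 = 1) :
    Real.logb 2 d ≤
      (∑ k, -(‖φ k‖ ^ 2 * Real.logb 2 (‖φ k‖ ^ 2))) +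
      (∑ k, -(‖∑ i, star (φ i) * U i k‖ ^ 2 *
              Real.logb 2 (‖∑ i, star (φ i) * U i k‖ ^ 2))) := by
  set b : Fin d → ℂ := fun l => ∑ i, star (φ i) * U i l with hb_def
  set q : Fin d → ℝ := fun l => ‖b l‖ ^ 2 with hq_def
  set p : Fin d → ℝ := fun k => ‖φ k‖ ^ 2 with hp_def
  have hq1 : ∑ l, q l = 1 := by
    have h2 := parseval d U hU (fun i => star (φ i))
    simp only [norm_star] at h2
    exact h2.trans hφ
  have hq0 : ∀ l, 0 ≤ q l := fun l => by positivity
  have hp0 : ∀ k, 0 ≤ p k := fun k => by positivity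
  -- the function h
  set h : ℝ → ℝ := fun s =>
    (1-s)/2 * Real.log (∑ l, (q l) ^ ((1:ℝ)/(1-s)))
    - (1+s)/2 * Real.log (∑ k, (p k) ^ ((1:ℝ)/(1+s)))
    + s/2 * Real.log d with hh_def
  have hS0 : (∑ l, (q l) ^ ((1:ℝ)/(1-(0:ℝ)))) = 1 := by
    rw [show (1:ℝ)/(1-(0:ℝ)) = 1 by norm_num]
    simp only [Real.rpow_one]
    exact hq1
  have hT0 : (∑ k, (p k) ^ ((1:ℝ)/(1+(0:ℝ)))) = 1 := by
    rw [show (1:ℝ)/(1+(0:ℝ)) = 1 by norm_num]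
    simp only [Real.rpow_one]
    exact hφ
  have hh0 : h 0 = 0 := by
    rw [hh_def]
    simp only
    rw [hS0, hT0]
    simp
  -- h is nonpositive on (0,1)
  have hneg : ∀ s ∈ Set.Ioo (0:ℝ) 1, h s ≤ 0 := by
    intro s hs
    have := claimB d hd U hU hmub φ hφ s hs
    rw [hh_def]
    simp only
    linarith [this]
  -- derivative of h at 0
  have hcS : HasDerivAt (fun s : ℝ => (1:ℝ)/(1-s)) 1 0 := by
    simp only [one_div]
    have h1 : HasDerivAt (fun s : ℝ => 1 - s) (-1) 0 := by
      simpa using (hasDerivAt_id (0:ℝ)).const_sub 1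
    have h2 := h1.inv (by norm_num)
    refine h2.congr_deriv ?_
    norm_num
  have hcT : HasDerivAt (fun s : ℝ => (1:ℝ)/(1+s)) (-1) 0 := by
    simp only [one_div]
    have h1 : HasDerivAt (fun s : ℝ => 1 + s) 1 0 := by
      simpa using (hasDerivAt_id (0:ℝ)).const_add 1
    have h2 := h1.inv (by norm_num)
    refine h2.congr_deriv ?_
    norm_num
  have hevS : ∀ᶠ s in nhds (0:ℝ), (1:ℝ)/(1-s) ≠ 0 := by
    have : ∀ᶠ s in nhds (0:ℝ), s ≠ 1 := eventually_ne_nhds (by norm_num)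
    filter_upwards [this] with s hs
    rw [one_div]
    exact inv_ne_zero (sub_ne_zero.mpr (Ne.symm hs))
  have hevT : ∀ᶠ s in nhds (0:ℝ), (1:ℝ)/(1+s) ≠ 0 := by
    have : ∀ᶠ s in nhds (0:ℝ), s ≠ -1 := eventually_ne_nhds (by norm_num)
    filter_upwards [this] with s hs
    rw [one_div]
    refine inv_ne_zero ?_
    intro hc
    exact hs (by linarith)
  have hS'' : HasDerivAt (fun s : ℝ => ∑ l, (q l) ^ ((1:ℝ)/(1-s)))
      (∑ l, q l * Real.log (q l)) 0 := by
    have hsum := HasDerivAt.fun_sum (u := Finset.univ)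
      (fun l _ => hasDerivAt_rpow_param (hq0 l) hcS (by norm_num) hevS)
    refine hsum.congr_deriv ?_
    apply Finset.sum_congr rfl
    intro l _
    rw [show (1:ℝ)/(1-(0:ℝ)) = 1 by norm_num, Real.rpow_one]
    ring
  have hT'' : HasDerivAt (fun s : ℝ => ∑ k, (p k) ^ ((1:ℝ)/(1+s)))
      (-∑ k, p k * Real.log (p k)) 0 := by
    have hsum := HasDerivAt.fun_sum (u := Finset.univ)
      (fun k _ => hasDerivAt_rpow_param (hp0 k) hcT (by norm_num) hevT)
    refine hsum.congr_deriv ?_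
    rw [← Finset.sum_neg_distrib]
    apply Finset.sum_congr rfl
    intro k _
    rw [show (1:ℝ)/(1+(0:ℝ)) = 1 by norm_num, Real.rpow_one]
    ring
  have HlogS : HasDerivAt (fun s : ℝ => Real.log (∑ l, (q l) ^ ((1:ℝ)/(1-s))))
      (∑ l, q l * Real.log (q l)) 0 := by
    have := hS''.log (by rw [hS0]; norm_num)
    convert this using 1
    rw [hS0]
    norm_num
  have HlogT : HasDerivAt (fun s : ℝ => Real.log (∑ k, (p k) ^ ((1:ℝ)/(1+s))))
      (-∑ k, p k * Real.log (p k)) 0 := by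
    have := hT''.log (by rw [hT0]; norm_num)
    convert this using 1
    rw [hT0]
    norm_num
  have Hlin1 : HasDerivAt (fun s : ℝ => (1-s)/2) (-(1/2) : ℝ) 0 := by
    have h1 : HasDerivAt (fun s : ℝ => 1 - s) (-1) 0 := by
      simpa using (hasDerivAt_id (0:ℝ)).const_sub 1
    refine (h1.div_const 2).congr_deriv ?_
    norm_num
  have Hlin2 : HasDerivAt (fun s : ℝ => (1+s)/2) ((1/2) : ℝ) 0 := by
    have h1 : HasDerivAt (fun s : ℝ => 1 + s) 1 0 := by
      simpa using (hasDerivAt_id (0:ℝ)).const_add 1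
    simpa using h1.div_const 2
  have Hlin3 : HasDerivAt (fun s : ℝ => s/2 * Real.log d) (Real.log d / 2) 0 := by
    have h1 : HasDerivAt (fun s : ℝ => s/2) ((1/2) : ℝ) 0 := by
      simpa using (hasDerivAt_id (0:ℝ)).div_const 2
    have := h1.mul_const (Real.log d)
    refine this.congr_deriv ?_
    ring
  set D : ℝ := ((∑ l, q l * Real.log (q l)) + (∑ k, p k * Real.log (p k))
    + Real.log d)/2 with hD_def
  have Hh : HasDerivAt h D 0 := by
    have comp := ((Hlin1.mul HlogS).sub (Hlin2.mul HlogT)).add Hlin3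
    rw [hh_def]
    refine comp.congr_deriv ?_
    rw [hS0, hT0, hD_def]
    simp [Real.log_one]
    ring
  -- conclude D ≤ 0
  have hDle : D ≤ 0 := by
    have htend := hasDerivAt_iff_tendsto_slope.mp Hh
    have htend2 : Filter.Tendsto (slope h 0) (nhdsWithin 0 (Set.Ioi (0:ℝ))) (nhds D) :=
      htend.mono_left (nhdsWithin_mono _ (fun s hs => ne_of_gt hs))
    refine le_of_tendsto htend2 ?_
    have hIoo : Set.Ioo (0:ℝ) 1 ∈ nhdsWithin 0 (Set.Ioi (0:ℝ)) :=
      Ioo_mem_nhdsGT_of_mem ⟨le_refl 0, one_pos⟩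
    filter_upwards [hIoo] with s hs
    rw [slope_def_field, hh0]
    have h1 : h s ≤ 0 := hneg s hs
    have h2 : (0:ℝ) < s := hs.1
    rw [sub_zero, sub_zero]
    exact div_nonpos_of_nonpos_of_nonneg h1 h2.le
  -- conclude
  have hkey : Real.log d ≤ -(∑ k, p k * Real.log (p k)) - (∑ l, q l * Real.log (q l)) := by
    rw [hD_def] at hDle
    linarith [hDle]
  have hlog2 : (0:ℝ) < Real.log 2 := Real.log_pos one_lt_two
  show Real.logb 2 d ≤ (∑ k, -(p k * Real.logb 2 (p k))) + (∑ l, -(q l * Real.logb 2 (q l)))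
  have hgoal : (∑ k, -(p k * Real.logb 2 (p k))) + (∑ l, -(q l * Real.logb 2 (q l)))
      = (-(∑ k, p k * Real.log (p k)) - (∑ l, q l * Real.log (q l))) / Real.log 2 := by
    simp only [Real.logb]
    rw [Finset.sum_congr rfl (fun k (_ : k ∈ Finset.univ) =>
        show -(p k * (Real.log (p k)/Real.log 2)) = -(p k * Real.log (p k))/Real.log 2 by ring),
      Finset.sum_congr rfl (fun l (_ : l ∈ Finset.univ) =>
        show -(q l * (Real.log (q l)/Real.log 2)) = -(q l * Real.log (q l))/Real.log 2 by ring),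
      ← Finset.sum_div, ← Finset.sum_div]
    rw [Finset.sum_neg_distrib, Finset.sum_neg_distrib]
    ring
  rw [hgoal, Real.logb]
  exact (div_le_div_iff_of_pos_right hlog2).mpr hkey
end
end

section
/- Let d ≥ 2, U₀ = I, and U₁ a d×d unitary with |⟨i|U₁|k⟩|² = 1/d for all i, k. Consider the ensemble E of 2d equiprobable pure states {U_t|k⟩ : k ∈ {0,…,d−1}, t ∈ {0,1}}, each with probability 1/(2d). Then the accessible information of E satisfies I_acc(E) ≤ (1/2) log₂ d. -/
open scoped BigOperators Classical ComplexOrder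
open Matrix Kronecker

noncomputable section

namespace Aux

lemma normsq_eq_re (z : ℂ) : ‖z‖^2 = (z * (starRingEnd ℂ) z).re := by
  rw [Complex.mul_conj, Complex.ofReal_re, Complex.sq_norm]

lemma mul_conj'' (z : ℂ) : z * (starRingEnd ℂ) z = ((‖z‖^2 : ℝ) : ℂ) := by
  rw [Complex.mul_conj, Complex.sq_norm]

lemma sumV {d : ℕ} (V : Matrix (Fin d) (Fin d) ℂ) (h : star V * V = 1) (x : Fin d → ℂ) :
    ∑ k, ‖∑ i, V k i * x i‖^2 = ∑ i, ‖x i‖^2 := by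
  have key : ∀ i' i : Fin d, (∑ k, (starRingEnd ℂ) (V k i') * V k i) = if i' = i then 1 else 0 := by
    intro i' i
    have h2 := congrFun (congrFun h i') i
    simpa [Matrix.mul_apply, Matrix.one_apply, Matrix.star_apply] using h2
  have C : (∑ k, (∑ i, V k i * x i) * (starRingEnd ℂ) (∑ i', V k i' * x i'))
       = ∑ i, x i * (starRingEnd ℂ) (x i) := by
    calc ∑ k, (∑ i, V k i * x i) * (starRingEnd ℂ) (∑ i', V k i' * x i')
        = ∑ k, ∑ i, ∑ i', (x i * (starRingEnd ℂ) (x i')) * ((starRingEnd ℂ) (V k i') * V k i) := by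
          refine Finset.sum_congr rfl fun k _ => ?_
          rw [map_sum, Finset.sum_mul]
          refine Finset.sum_congr rfl fun i _ => ?_
          rw [Finset.mul_sum]
          refine Finset.sum_congr rfl fun i' _ => ?_
          rw [_root_.map_mul]
          ring
      _ = ∑ i, ∑ k, ∑ i', (x i * (starRingEnd ℂ) (x i')) * ((starRingEnd ℂ) (V k i') * V k i) := by
          rw [Finset.sum_comm]
      _ = ∑ i, ∑ i', ∑ k, (x i * (starRingEnd ℂ) (x i')) * ((starRingEnd ℂ) (V k i') * V k i) := by
          refine Finset.sum_congr rfl fun i _ => ?_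
          rw [Finset.sum_comm]
      _ = ∑ i, ∑ i', (x i * (starRingEnd ℂ) (x i')) * (∑ k, (starRingEnd ℂ) (V k i') * V k i) := by
          simp [Finset.mul_sum]
      _ = ∑ i, x i * (starRingEnd ℂ) (x i) := by
          simp only [key]
          simp
  have hre : ∑ k, ‖∑ i, V k i * x i‖^2
      = (∑ k, (∑ i, V k i * x i) * (starRingEnd ℂ) (∑ i', V k i' * x i')).re := by
    rw [Complex.re_sum]
    exact Finset.sum_congr rfl fun k _ => normsq_eq_re _
  rw [hre, C, Complex.re_sum]
  exact Finset.sum_congr rfl fun i _ => (normsq_eq_re _).symm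

lemma col_unit {d : ℕ} (V : Matrix (Fin d) (Fin d) ℂ) (h : star V * V = 1) (m : Fin d) :
    ∑ i, ‖V i m‖^2 = 1 := by
  have h0 := sumV V h (fun i => if i = m then (1:ℂ) else 0)
  have l : ∀ k, (∑ i, V k i * (if i = m then (1:ℂ) else 0)) = V k m := by
    intro k; simp
  simp only [l] at h0
  rw [h0]
  have l2 : ∀ i : Fin d, ‖if i = m then (1:ℂ) else 0‖^2 = if i = m then (1:ℝ) else 0 := by
    intro i; by_cases hi : i = m <;> simp [hi]
  rw [Finset.sum_congr rfl fun i _ => l2 i]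
  simp

lemma sumVrow {d : ℕ} (V : Matrix (Fin d) (Fin d) ℂ) (h : V * star V = 1) (x : Fin d → ℂ) :
    ∑ k, ‖∑ i, (starRingEnd ℂ) (x i) * V i k‖^2 = ∑ i, ‖x i‖^2 := by
  have h' : star (star V) * star V = 1 := by rwa [star_star]
  have h0 := sumV (star V) h' x
  rw [← h0]
  refine Finset.sum_congr rfl fun k _ => ?_
  have l : ∑ i, (star V) k i * x i = (starRingEnd ℂ) (∑ i, (starRingEnd ℂ) (x i) * V i k) := by
    rw [map_sum]
    refine Finset.sum_congr rfl fun i _ => ?_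
    simp [Matrix.star_apply, _root_.map_mul, mul_comm]
  rw [l, RCLike.norm_conj]

lemma trace_mul_outer {d : ℕ} (A : Matrix (Fin d) (Fin d) ℂ) (u : Fin d → ℂ) :
    (A * outer u).trace = ∑ i, ∑ i', A i i' * (u i' * (starRingEnd ℂ) (u i)) := by
  rw [Matrix.trace]
  simp [Matrix.diag, Matrix.mul_apply, outer]

lemma psd_trace_outer {d : ℕ} {A : Matrix (Fin d) (Fin d) ℂ} (hA : A.PosSemidef) (u : Fin d → ℂ) :
    (A * outer u).trace =
      ((∑ m, hA.1.eigenvalues m *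
        ‖∑ i, (starRingEnd ℂ) (((hA.1.eigenvectorUnitary : Matrix (Fin d) (Fin d) ℂ)) i m) * u i‖^2 : ℝ) : ℂ) := by
  set W : Matrix (Fin d) (Fin d) ℂ := (hA.1.eigenvectorUnitary : Matrix (Fin d) (Fin d) ℂ) with hW
  set e : Fin d → ℝ := hA.1.eigenvalues with he
  have hcoe : ((RCLike.ofReal : ℝ → ℂ)) = Complex.ofReal := rfl
  have hentry : ∀ i i', A i i' = ∑ m, ((e m : ℝ) : ℂ) * (W i m * (starRingEnd ℂ) (W i' m)) := by
    intro i i'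
    conv_lhs => rw [hA.1.spectral_theorem, Unitary.conjStarAlgAut_apply]
    rw [Matrix.mul_apply]
    refine Finset.sum_congr rfl fun m _ => ?_
    rw [Matrix.mul_diagonal]
    simp only [Matrix.star_apply, RCLike.star_def, Function.comp_apply, hcoe]
    ring
  calc (A * outer u).trace
      = ∑ i, ∑ i', A i i' * (u i' * (starRingEnd ℂ) (u i)) := trace_mul_outer A u
    _ = ∑ i, ∑ i', ∑ m, (e m : ℂ) * (((starRingEnd ℂ) (W i' m) * u i') * (W i m * (starRingEnd ℂ) (u i))) := by
        refine Finset.sum_congr rfl fun i _ => Finset.sum_congr rfl fun i' _ => ?_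
        rw [hentry i i', Finset.sum_mul]
        refine Finset.sum_congr rfl fun m _ => by ring
    _ = ∑ i, ∑ m, ∑ i', (e m : ℂ) * (((starRingEnd ℂ) (W i' m) * u i') * (W i m * (starRingEnd ℂ) (u i))) := by
        refine Finset.sum_congr rfl fun i _ => ?_
        rw [Finset.sum_comm]
    _ = ∑ m, ∑ i, ∑ i', (e m : ℂ) * (((starRingEnd ℂ) (W i' m) * u i') * (W i m * (starRingEnd ℂ) (u i))) := by
        rw [Finset.sum_comm]
    _ = ∑ m, (e m : ℂ) * ((∑ i', (starRingEnd ℂ) (W i' m) * u i') * (∑ i, W i m * (starRingEnd ℂ) (u i))) := by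
        refine Finset.sum_congr rfl fun m _ => ?_
        have hfact : ((∑ i', (starRingEnd ℂ) (W i' m) * u i') * (∑ i, W i m * (starRingEnd ℂ) (u i)))
            = ∑ i, ∑ i', ((starRingEnd ℂ) (W i' m) * u i') * (W i m * (starRingEnd ℂ) (u i)) := by
          rw [Finset.sum_mul_sum]
          exact Finset.sum_comm
        rw [hfact, Finset.mul_sum]
        refine Finset.sum_congr rfl fun i _ => by rw [Finset.mul_sum]
    _ = ∑ m, ((e m * ‖∑ i, (starRingEnd ℂ) (W i m) * u i‖^2 : ℝ) : ℂ) := by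
        refine Finset.sum_congr rfl fun m _ => ?_
        have hc : (∑ i, W i m * (starRingEnd ℂ) (u i))
            = (starRingEnd ℂ) (∑ i', (starRingEnd ℂ) (W i' m) * u i') := by
          rw [map_sum]
          refine Finset.sum_congr rfl fun i _ => ?_
          simp [_root_.map_mul, Complex.conj_conj]
        rw [hc, mul_conj'']
        push_cast
        ring
    _ = _ := by rw [Complex.ofReal_sum]

def nb (x : ℝ) : ℝ := -(x * Real.logb 2 x)

lemma nb_mul (x y : ℝ) : nb (x * y) = y * nb x + x * nb y := by
  rcases eq_or_ne x 0 with hx | hx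
  · simp [nb, hx]
  rcases eq_or_ne y 0 with hy | hy
  · simp [nb, hy]
  unfold nb
  rw [Real.logb_mul hx hy]
  ring

lemma nb_half (x : ℝ) : nb (x / 2) = nb x / 2 + x / 2 := by
  have h2 : nb (1/2) = 1/2 := by
    unfold nb
    rw [one_div, Real.logb_inv, Real.logb_self_eq_one] <;> norm_num
  have := nb_mul x (1/2)
  rw [show x * (1/2) = x / 2 by ring] at this
  rw [this, h2]
  ring

lemma nb_eq_smul : nb = (Real.log 2)⁻¹ • Real.negMulLog := by
  funext x
  simp only [Pi.smul_apply, smul_eq_mul, Real.negMulLog, nb, Real.logb, neg_mul]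
  field_simp

lemma nb_concave : ConcaveOn ℝ (Set.Ici 0) nb := by
  rw [nb_eq_smul]
  exact Real.concaveOn_negMulLog.smul (by positivity)

lemma slope_le {h : ℝ → ℝ} {D : ℝ} (hD : HasDerivAt h D 0) (h0 : h 0 = 0)
    (hle : ∀ θ ∈ Set.Ioo (0:ℝ) 1, h θ ≤ 0) : D ≤ 0 := by
  have ht := hasDerivAt_iff_tendsto_slope.mp hD
  have hmono : (nhdsWithin (0:ℝ) (Set.Ioi 0)) ≤ (nhdsWithin (0:ℝ) {(0:ℝ)}ᶜ) :=
    nhdsWithin_mono _ (fun x hx => ne_of_gt hx)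
  have ht' : Filter.Tendsto (slope h 0) (nhdsWithin (0:ℝ) (Set.Ioi 0)) (nhds D) :=
    ht.mono_left hmono
  refine le_of_tendsto ht' ?_
  have hIoo : Set.Ioo (0:ℝ) 1 ∈ nhdsWithin (0:ℝ) (Set.Ioi 0) :=
    Ioo_mem_nhdsGT_of_mem (by norm_num)
  filter_upwards [hIoo] with θ hθ
  rw [slope_def_field, h0]
  simp only [sub_zero]
  exact div_nonpos_of_nonpos_of_nonneg (hle θ hθ) hθ.1.le

lemma sq_rpow {r : ℝ} (hr : 0 ≤ r) (c : ℝ) : (r ^ c)^2 = (r^2) ^ c := by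
  rw [← Real.rpow_natCast (r ^ c) 2, ← Real.rpow_mul hr, ← Real.rpow_natCast r 2,
    ← Real.rpow_mul hr, mul_comm]

lemma rpow_bound {r : ℝ} (hr : 0 ≤ r) {a c : ℝ} (h0 : 0 ≤ a) (h2 : a ≤ c) :
    r ^ a ≤ max 1 (r ^ c) := by
  rcases le_or_gt 1 r with h1 | h1
  · exact le_max_of_le_right (Real.rpow_le_rpow_of_exponent_le h1 h2)
  · exact le_max_of_le_left (Real.rpow_le_one hr h1.le h0)

lemma cs_sqrt {d : ℕ} (u v : Fin d → ℝ) (hu : ∀ k, 0 ≤ u k) (hv : ∀ k, 0 ≤ v k) :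
    ∑ k, u k * v k ≤ Real.sqrt (∑ k, (u k)^2) * Real.sqrt (∑ k, (v k)^2) := by
  have h := Finset.sum_mul_sq_le_sq_mul_sq Finset.univ u v
  have hnn : 0 ≤ ∑ k, u k * v k := Finset.sum_nonneg fun k _ => mul_nonneg (hu k) (hv k)
  calc ∑ k, u k * v k = Real.sqrt ((∑ k, u k * v k)^2) := (Real.sqrt_sq hnn).symm
    _ ≤ Real.sqrt ((∑ k, (u k)^2) * (∑ k, (v k)^2)) := Real.sqrt_le_sqrt h
    _ = _ := Real.sqrt_mul (Finset.sum_nonneg fun k _ => sq_nonneg _) _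

lemma rt_ineq {d : ℕ} {V : Matrix (Fin d) (Fin d) ℂ}
    (hcol : star V * V = 1) (hmod : ∀ k i, ‖V k i‖ = Real.sqrt (1/(d:ℝ)))
    (w : Fin d → ℂ) {θ : ℝ} (hθ : θ ∈ Set.Ioo (0:ℝ) 1) :
    (∑ k, (‖∑ i, V k i * w i‖^2) ^ ((1-θ)⁻¹ : ℝ)) ≤
      (Real.sqrt (∑ k, (‖∑ i, V k i * w i‖^2) ^ ((1-θ)⁻¹ : ℝ)) *
        Real.sqrt (∑ i, (‖w i‖^2) ^ ((1+θ)⁻¹ : ℝ))) ^ ((1:ℝ)-θ) *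
      ((∑ k, (‖∑ i, V k i * w i‖^2) ^ ((1-θ)⁻¹ : ℝ)) *
        (Real.sqrt (1/(d:ℝ)) * (∑ i, (‖w i‖^2) ^ ((1+θ)⁻¹ : ℝ)))) ^ θ := by
  obtain ⟨hθ0, hθ1⟩ := hθ
  have h1θ : (0:ℝ) < 1 - θ := by linarith
  have h1θ' : (0:ℝ) < 1 + θ := by linarith
  set g : Fin d → ℂ := fun k => ∑ i, V k i * w i with hg
  set T : ℝ := ∑ k, (‖g k‖^2) ^ ((1-θ)⁻¹ : ℝ) with hT
  set S : ℝ := ∑ i, (‖w i‖^2) ^ ((1+θ)⁻¹ : ℝ) with hS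
  set Y : ℝ := Real.sqrt (1/(d:ℝ)) with hY
  set cw : Fin d → ℝ := fun i => (1+θ)⁻¹ * Real.log ‖w i‖ with hcw
  set cg : Fin d → ℝ := fun k => (1-θ)⁻¹ * Real.log ‖g k‖ with hcg
  set φ : Fin d → ℂ → ℂ := fun i z =>
    if w i = 0 then 0 else (w i / (‖w i‖ : ℂ)) * Complex.exp ((cw i : ℂ) * (1+z)) with hφ
  set ψ : Fin d → ℂ → ℂ := fun k z =>
    if g k = 0 then 0 else (starRingEnd ℂ) (g k / (‖g k‖ : ℂ)) * Complex.exp ((cg k : ℂ) * (1+z)) with hψ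
  set F : ℂ → ℂ := fun z => ∑ k, ψ k z * (∑ i, V k i * φ i z) with hF
  -- norms of φ and ψ
  have hφn : ∀ i z, ‖φ i z‖ = if w i = 0 then 0 else ‖w i‖ ^ ((1+θ)⁻¹ * (1+z.re)) := by
    intro i z
    by_cases hwi : w i = 0
    · simp [hφ, hwi]
    · have hwp : 0 < ‖w i‖ := norm_pos_iff.mpr hwi
      have h1 : ‖w i / (‖w i‖:ℂ)‖ = 1 := by
        rw [norm_div, Complex.norm_real, Real.norm_eq_abs, abs_of_pos hwp, div_self hwp.ne']
      have hre : ((cw i : ℂ) * (1+z)).re = cw i * (1+z.re) := by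
        simp [Complex.mul_re, Complex.add_re]
      have h2 : ‖Complex.exp ((cw i:ℂ)*(1+z))‖ = ‖w i‖ ^ ((1+θ)⁻¹ * (1+z.re)) := by
        rw [Complex.norm_exp, hre, Real.rpow_def_of_pos hwp]
        congr 1
        simp only [hcw]
        ring
      simp only [hφ, hwi, if_false, norm_mul, h1, h2, one_mul]
  have hψn : ∀ k z, ‖ψ k z‖ = if g k = 0 then 0 else ‖g k‖ ^ ((1-θ)⁻¹ * (1+z.re)) := by
    intro k z
    by_cases hgk : g k = 0
    · simp [hψ, hgk]
    · have hgp : 0 < ‖g k‖ := norm_pos_iff.mpr hgk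
      have h1 : ‖(starRingEnd ℂ) (g k / (‖g k‖:ℂ))‖ = 1 := by
        rw [RCLike.norm_conj, norm_div, Complex.norm_real, Real.norm_eq_abs, abs_of_pos hgp,
          div_self hgp.ne']
      have hre : ((cg k : ℂ) * (1+z)).re = cg k * (1+z.re) := by
        simp [Complex.mul_re, Complex.add_re]
      have h2 : ‖Complex.exp ((cg k:ℂ)*(1+z))‖ = ‖g k‖ ^ ((1-θ)⁻¹ * (1+z.re)) := by
        rw [Complex.norm_exp, hre, Real.rpow_def_of_pos hgp]
        congr 1
        simp only [hcg]
        ring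
      simp only [hψ, hgk, if_false, norm_mul, h1, h2, one_mul]
  -- squared norms sum to T-like quantities
  have hψsq : ∀ z t, 0 ≤ t → z.re = t → ∑ k, ‖ψ k z‖^2 = ∑ k, (‖g k‖^2) ^ ((1-θ)⁻¹ * (1+t)) := by
    intro z t ht hzt
    refine Finset.sum_congr rfl fun k _ => ?_
    rw [hψn k z, hzt]
    by_cases hgk : g k = 0
    · rw [if_pos hgk, hgk]
      simp only [norm_zero]
      have hepos : 0 < (1-θ)⁻¹ * (1+t) := by positivity
      rw [show ((0:ℝ)^2 : ℝ) = (0:ℝ) by norm_num, Real.zero_rpow (ne_of_gt hepos)]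
    · rw [if_neg hgk, sq_rpow (norm_nonneg _)]
  have hφsq : ∀ z t, 0 ≤ t → z.re = t → ∑ i, ‖φ i z‖^2 = ∑ i, (‖w i‖^2) ^ ((1+θ)⁻¹ * (1+t)) := by
    intro z t ht hzt
    refine Finset.sum_congr rfl fun i _ => ?_
    rw [hφn i z, hzt]
    by_cases hwi : w i = 0
    · rw [if_pos hwi, hwi]
      simp only [norm_zero]
      have hepos : 0 < (1+θ)⁻¹ * (1+t) := by positivity
      rw [show ((0:ℝ)^2 : ℝ) = (0:ℝ) by norm_num, Real.zero_rpow (ne_of_gt hepos)]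
    · rw [if_neg hwi, sq_rpow (norm_nonneg _)]
  -- differentiability
  have hdiff : Differentiable ℂ F := by
    rw [hF]
    apply Differentiable.fun_sum
    intro k _
    apply Differentiable.mul
    · rw [hψ]
      by_cases hgk : g k = 0
      · simp only [hgk, if_true]
        exact differentiable_const 0
      · simp only [hgk, if_false]
        apply Differentiable.const_mul
        apply Complex.differentiable_exp.comp
        apply Differentiable.const_mul
        exact (differentiable_const 1).add differentiable_id
    · apply Differentiable.fun_sum
      intro i _
      apply Differentiable.const_mul
      rw [hφ]
      by_cases hwi : w i = 0
      · simp only [hwi, if_true]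
        exact differentiable_const 0
      · simp only [hwi, if_false]
        apply Differentiable.const_mul
        apply Complex.differentiable_exp.comp
        apply Differentiable.const_mul
        exact (differentiable_const 1).add differentiable_id
  -- generic bound on ‖F z‖ in the strip
  have hFbd : ∀ z : ℂ, 0 ≤ z.re → z.re ≤ 1 →
      ‖F z‖ ≤ ∑ k, (max 1 (‖g k‖ ^ (2*(1-θ)⁻¹))) * ∑ i, Y * (max 1 (‖w i‖ ^ (2*(1+θ)⁻¹))) := by
    intro z hz0 hz1
    rw [hF]
    refine le_trans (norm_sum_le _ _) ?_
    refine Finset.sum_le_sum fun k _ => ?_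
    rw [norm_mul]
    have hψb : ‖ψ k z‖ ≤ max 1 (‖g k‖ ^ (2*(1-θ)⁻¹)) := by
      rw [hψn k z]
      by_cases hgk : g k = 0
      · rw [if_pos hgk]
        exact le_max_of_le_left zero_le_one
      · rw [if_neg hgk]
        apply rpow_bound (norm_nonneg _)
        · positivity
        · have h2 : (1+z.re) ≤ 2 := by linarith
          have := mul_le_mul_of_nonneg_left h2 (le_of_lt (inv_pos.mpr h1θ))
          linarith [this]
    have hφb : ‖∑ i, V k i * φ i z‖ ≤ ∑ i, Y * (max 1 (‖w i‖ ^ (2*(1+θ)⁻¹))) := by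
      refine le_trans (norm_sum_le _ _) ?_
      refine Finset.sum_le_sum fun i _ => ?_
      rw [norm_mul, hmod k i]
      refine mul_le_mul_of_nonneg_left ?_ (Real.sqrt_nonneg _)
      rw [hφn i z]
      by_cases hwi : w i = 0
      · rw [if_pos hwi]
        exact le_max_of_le_left zero_le_one
      · rw [if_neg hwi]
        apply rpow_bound (norm_nonneg _)
        · positivity
        · have h2 : (1+z.re) ≤ 2 := by linarith
          have := mul_le_mul_of_nonneg_left h2 (le_of_lt (inv_pos.mpr h1θ'))
          linarith [this]
    calc ‖ψ k z‖ * ‖∑ i, V k i * φ i z‖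
        ≤ (max 1 (‖g k‖ ^ (2*(1-θ)⁻¹))) * (∑ i, Y * (max 1 (‖w i‖ ^ (2*(1+θ)⁻¹)))) := by
          apply mul_le_mul hψb hφb (norm_nonneg _)
          exact le_max_of_le_left zero_le_one
      _ = _ := rfl
  -- edge 0
  have hedge0 : ∀ z : ℂ, z.re = 0 → ‖F z‖ ≤ Real.sqrt T * Real.sqrt S := by
    intro z hz
    have hb : ‖F z‖ ≤ ∑ k, ‖ψ k z‖ * ‖∑ i, V k i * φ i z‖ := by
      rw [hF]
      refine le_trans (norm_sum_le _ _) (Finset.sum_le_sum fun k _ => le_of_eq (norm_mul _ _))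
    refine le_trans hb ?_
    refine le_trans (cs_sqrt _ _ (fun k => norm_nonneg _) (fun k => norm_nonneg _)) ?_
    have e1 : ∑ k, ‖ψ k z‖^2 = T := by
      rw [hψsq z 0 le_rfl hz, hT]
      refine Finset.sum_congr rfl fun k _ => by norm_num
    have e2 : ∑ k, ‖∑ i, V k i * φ i z‖^2 = S := by
      rw [sumV V hcol (fun i => φ i z), hφsq z 0 le_rfl hz, hS]
      refine Finset.sum_congr rfl fun i _ => by norm_num
    rw [e1, e2]
  -- edge 1
  have hsingle_ψ : ∀ z : ℂ, z.re = 1 → ∀ k, ‖ψ k z‖ = (‖g k‖^2) ^ ((1-θ)⁻¹ : ℝ) := by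
    intro z hz k
    rw [hψn k z, hz]
    by_cases hgk : g k = 0
    · rw [if_pos hgk, hgk]
      simp only [norm_zero]
      rw [show ((0:ℝ)^2 : ℝ) = (0:ℝ) by norm_num, Real.zero_rpow (ne_of_gt (inv_pos.mpr h1θ))]
    · rw [if_neg hgk, ← Real.rpow_natCast ‖g k‖ 2, ← Real.rpow_mul (norm_nonneg _)]
      congr 1
      push_cast
      ring
  have hsingle_φ : ∀ z : ℂ, z.re = 1 → ∀ i, ‖φ i z‖ = (‖w i‖^2) ^ ((1+θ)⁻¹ : ℝ) := by
    intro z hz i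
    rw [hφn i z, hz]
    by_cases hwi : w i = 0
    · rw [if_pos hwi, hwi]
      simp only [norm_zero]
      rw [show ((0:ℝ)^2 : ℝ) = (0:ℝ) by norm_num, Real.zero_rpow (ne_of_gt (inv_pos.mpr h1θ'))]
    · rw [if_neg hwi, ← Real.rpow_natCast ‖w i‖ 2, ← Real.rpow_mul (norm_nonneg _)]
      congr 1
      push_cast
      ring
  have hedge1 : ∀ z : ℂ, z.re = 1 → ‖F z‖ ≤ T * (Y * S) := by
    intro z hz
    have hb : ‖F z‖ ≤ ∑ k, ‖ψ k z‖ * ‖∑ i, V k i * φ i z‖ := by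
      rw [hF]
      refine le_trans (norm_sum_le _ _) (Finset.sum_le_sum fun k _ => le_of_eq (norm_mul _ _))
    refine le_trans hb ?_
    have hin : ∀ k, ‖∑ i, V k i * φ i z‖ ≤ Y * S := by
      intro k
      refine le_trans (norm_sum_le _ _) ?_
      have : ∀ i : Fin d, ‖V k i * φ i z‖ = Y * ((‖w i‖^2) ^ ((1+θ)⁻¹ : ℝ)) := by
        intro i
        rw [norm_mul, hmod k i, hsingle_φ z hz i]
      rw [Finset.sum_congr rfl fun i _ => this i, ← Finset.mul_sum, hS]
    calc ∑ k, ‖ψ k z‖ * ‖∑ i, V k i * φ i z‖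
        ≤ ∑ k, ((‖g k‖^2) ^ ((1-θ)⁻¹ : ℝ)) * (Y * S) := by
          refine Finset.sum_le_sum fun k _ => ?_
          rw [hsingle_ψ z hz k]
          refine mul_le_mul_of_nonneg_left (hin k) (Real.rpow_nonneg (by positivity) _)
      _ = T * (Y * S) := by rw [← Finset.sum_mul, hT]
  -- value at θ
  have h1θ'' : (1:ℝ) + θ ≠ 0 := ne_of_gt h1θ'
  have hφθ : ∀ i, φ i (θ:ℂ) = w i := by
    intro i
    by_cases hwi : w i = 0
    · simp [hφ, hwi]
    · have hwp : 0 < ‖w i‖ := norm_pos_iff.mpr hwi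
      simp only [hφ, hwi, if_false]
      have hc1 : ((cw i : ℂ) * (1 + (θ:ℂ))) = ((cw i * (1+θ) : ℝ) : ℂ) := by push_cast; ring
      have hc2 : cw i * (1+θ) = Real.log ‖w i‖ := by
        simp only [hcw]
        field_simp
      rw [hc1, hc2, ← Complex.ofReal_exp, Real.exp_log hwp, div_mul_cancel₀]
      exact_mod_cast ne_of_gt hwp
  have hFθ : F (θ:ℂ) = ((T:ℝ):ℂ) := by
    have hterm : ∀ k, ψ k (θ:ℂ) * (∑ i, V k i * φ i (θ:ℂ))
        = (((‖g k‖^2) ^ ((1-θ)⁻¹:ℝ) : ℝ) : ℂ) := by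
      intro k
      have hsum : (∑ i, V k i * φ i (θ:ℂ)) = g k := by
        rw [hg]
        exact Finset.sum_congr rfl fun i _ => by rw [hφθ i]
      rw [hsum]
      by_cases hgk : g k = 0
      · simp only [hψ, hgk, if_true, zero_mul, norm_zero]
        rw [show ((0:ℝ)^2 : ℝ) = (0:ℝ) by norm_num, Real.zero_rpow (ne_of_gt (inv_pos.mpr h1θ))]
        simp
      · have hgp : 0 < ‖g k‖ := norm_pos_iff.mpr hgk
        simp only [hψ, hgk, if_false]
        have hc1 : ((cg k : ℂ) * (1 + (θ:ℂ))) = ((cg k * (1+θ) : ℝ) : ℂ) := by push_cast; ring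
        rw [hc1, ← Complex.ofReal_exp, map_div₀, Complex.conj_ofReal]
        have hreal : ‖g k‖^2 * Real.exp (cg k * (1+θ)) / ‖g k‖ = (‖g k‖^2) ^ ((1-θ)⁻¹:ℝ) := by
          have he : Real.exp (cg k * (1+θ)) = ‖g k‖ ^ ((1-θ)⁻¹ * (1+θ)) := by
            rw [Real.rpow_def_of_pos hgp]
            congr 1
            simp only [hcg]
            ring
          have e2 : (‖g k‖^2 : ℝ) = ‖g k‖ ^ (((2:ℕ):ℝ)) := (Real.rpow_natCast _ 2).symm
          have e3 : (((2:ℕ):ℝ)) + (1-θ)⁻¹*(1+θ) = (((2:ℕ):ℝ)) * (1-θ)⁻¹ + 1 := by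
            push_cast
            field_simp
            ring
          rw [he, e2, ← Real.rpow_add hgp, e3, Real.rpow_add hgp, Real.rpow_one,
            mul_div_cancel_right₀ _ hgp.ne', ← Real.rpow_mul (norm_nonneg _)]
        calc (starRingEnd ℂ) (g k) / (‖g k‖:ℂ) * ((Real.exp (cg k * (1+θ)) : ℝ):ℂ) * g k
            = (g k * (starRingEnd ℂ) (g k)) * ((Real.exp (cg k * (1+θ)) : ℝ):ℂ) / ((‖g k‖:ℝ):ℂ) := by
              ring
          _ = ((‖g k‖^2 : ℝ):ℂ) * ((Real.exp (cg k * (1+θ)) : ℝ):ℂ) / ((‖g k‖:ℝ):ℂ) := by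
              rw [mul_conj'']
          _ = ((‖g k‖^2 * Real.exp (cg k * (1+θ)) / ‖g k‖ : ℝ) : ℂ) := by push_cast; ring
          _ = _ := by rw [hreal]
    show (∑ k, ψ k (θ:ℂ) * (∑ i, V k i * φ i (θ:ℂ))) = ((T:ℝ):ℂ)
    rw [Finset.sum_congr rfl fun k _ => hterm k, ← Complex.ofReal_sum]
  -- apply Hadamard three lines
  have hmem : (θ:ℂ) ∈ Complex.HadamardThreeLines.verticalClosedStrip 0 1 := by
    simp only [Complex.HadamardThreeLines.verticalClosedStrip, Set.mem_preimage,
      Complex.ofReal_re, Set.mem_Icc]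
    exact ⟨hθ0.le, hθ1.le⟩
  have hBdd : BddAbove ((norm ∘ F) '' Complex.HadamardThreeLines.verticalClosedStrip 0 1) := by
    refine ⟨∑ k, (max 1 (‖g k‖ ^ (2*(1-θ)⁻¹))) * ∑ i, Y * (max 1 (‖w i‖ ^ (2*(1+θ)⁻¹))), ?_⟩
    rintro x ⟨z, hz, rfl⟩
    exact hFbd z hz.1 hz.2
  have happ := Complex.HadamardThreeLines.norm_le_interp_of_mem_verticalClosedStrip₀₁' F hmem
      hdiff.diffContOnCl hBdd
      (fun z hz => hedge0 z hz) (fun z hz => hedge1 z hz)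
  rw [hFθ] at happ
  have hTnn : 0 ≤ T := by
    rw [hT]
    exact Finset.sum_nonneg fun k _ => Real.rpow_nonneg (by positivity) _
  have hnorm : ‖((T:ℝ):ℂ)‖ = T := by
    rw [Complex.norm_real, Real.norm_eq_abs, abs_of_nonneg hTnn]
  rw [hnorm, Complex.ofReal_re] at happ
  exact happ

lemma mu_nat {d : ℕ} (hd : 1 ≤ d) {V : Matrix (Fin d) (Fin d) ℂ}
    (hV : V ∈ Matrix.unitaryGroup (Fin d) ℂ) (hmod : ∀ k i, ‖V k i‖^2 = 1/(d:ℝ))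
    (w : Fin d → ℂ) (hw : ∑ i, ‖w i‖^2 = 1) :
    Real.log d ≤ (∑ i, -(‖w i‖^2 * Real.log (‖w i‖^2)))
      + ∑ k, -(‖∑ i, V k i * w i‖^2 * Real.log (‖∑ i, V k i * w i‖^2)) := by
  have hd0 : (0:ℝ) < d := by exact_mod_cast Nat.lt_of_lt_of_le Nat.zero_lt_one hd
  have hcol : star V * V = 1 := Matrix.mem_unitaryGroup_iff'.mp hV
  have hmod' : ∀ k i, ‖V k i‖ = Real.sqrt (1/(d:ℝ)) := by
    intro k i
    rw [← hmod k i, Real.sqrt_sq (norm_nonneg _)]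
  set g : Fin d → ℂ := fun k => ∑ i, V k i * w i with hg
  set p : Fin d → ℝ := fun i => ‖w i‖^2 with hp
  set q : Fin d → ℝ := fun k => ‖g k‖^2 with hq
  have hpnn : ∀ i, 0 ≤ p i := fun i => by simp only [hp]; positivity
  have hqnn : ∀ k, 0 ≤ q k := fun k => by simp only [hq, hg]; positivity
  have hq1 : ∑ k, q k = 1 := by
    simp only [hq, hg]
    exact (sumV V hcol w).trans hw
  set Tf : ℝ → ℝ := fun θ => ∑ k, (q k) ^ ((1-θ)⁻¹ : ℝ) with hTf
  set Sf : ℝ → ℝ := fun θ => ∑ i, (p i) ^ ((1+θ)⁻¹ : ℝ) with hSf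
  have hT0 : Tf 0 = 1 := by
    rw [hTf]
    simp only [sub_zero, inv_one, Real.rpow_one]
    exact hq1
  have hS0 : Sf 0 = 1 := by
    rw [hSf]
    simp only [add_zero, inv_one, Real.rpow_one]
    exact hw
  obtain ⟨k0, -, hk0⟩ := Finset.exists_ne_zero_of_sum_ne_zero (s := Finset.univ)
    (f := q) (by rw [hq1]; norm_num)
  have hk0p : 0 < q k0 := lt_of_le_of_ne (hqnn k0) (Ne.symm hk0)
  obtain ⟨i0, -, hi0⟩ := Finset.exists_ne_zero_of_sum_ne_zero (s := Finset.univ)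
    (f := p) (by rw [hw]; norm_num)
  have hi0p : 0 < p i0 := lt_of_le_of_ne (hpnn i0) (Ne.symm hi0)
  have hTpos : ∀ θ : ℝ, 0 < Tf θ := by
    intro θ
    rw [hTf]
    refine Finset.sum_pos' (fun k _ => Real.rpow_nonneg (hqnn k) _) ?_
    exact ⟨k0, Finset.mem_univ _, Real.rpow_pos_of_pos hk0p _⟩
  have hSpos : ∀ θ : ℝ, 0 < Sf θ := by
    intro θ
    rw [hSf]
    refine Finset.sum_pos' (fun i _ => Real.rpow_nonneg (hpnn i) _) ?_
    exact ⟨i0, Finset.mem_univ _, Real.rpow_pos_of_pos hi0p _⟩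
  set h : ℝ → ℝ := fun θ =>
    ((1-θ)/2) * Real.log (Tf θ) + (Real.log d / 2) * θ - ((1+θ)/2) * Real.log (Sf θ) with hh
  have hineq : ∀ θ ∈ Set.Ioo (0:ℝ) 1, h θ ≤ 0 := by
    intro θ hθmem
    obtain ⟨hθ0, hθ1⟩ := hθmem
    have hrt := rt_ineq hcol hmod' w (Set.mem_Ioo.mpr ⟨hθ0, hθ1⟩)
    have hTθ : (∑ k, (‖∑ i, V k i * w i‖^2) ^ ((1-θ)⁻¹ : ℝ)) = Tf θ := by
      rw [hTf]
    have hSθ : (∑ i, (‖w i‖^2) ^ ((1+θ)⁻¹ : ℝ)) = Sf θ := by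
      rw [hSf]
    rw [hTθ, hSθ] at hrt
    have hTp := hTpos θ
    have hSp := hSpos θ
    have hYp : (0:ℝ) < Real.sqrt (1/(d:ℝ)) := Real.sqrt_pos.mpr (one_div_pos.mpr hd0)
    have hsq : 0 < Real.sqrt (Tf θ) * Real.sqrt (Sf θ) :=
      mul_pos (Real.sqrt_pos.mpr hTp) (Real.sqrt_pos.mpr hSp)
    have hb : 0 < Tf θ * (Real.sqrt (1/(d:ℝ)) * Sf θ) := mul_pos hTp (mul_pos hYp hSp)
    have hlog := Real.log_le_log hTp hrt
    rw [Real.log_mul (ne_of_gt (Real.rpow_pos_of_pos hsq _)) (ne_of_gt (Real.rpow_pos_of_pos hb _)),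
      Real.log_rpow hsq, Real.log_rpow hb,
      Real.log_mul (ne_of_gt (Real.sqrt_pos.mpr hTp)) (ne_of_gt (Real.sqrt_pos.mpr hSp)),
      Real.log_mul (ne_of_gt hTp) (ne_of_gt (mul_pos hYp hSp)),
      Real.log_mul (ne_of_gt hYp) (ne_of_gt hSp),
      Real.log_sqrt hTp.le, Real.log_sqrt hSp.le, Real.log_sqrt (one_div_pos.mpr hd0).le,
      one_div, Real.log_inv] at hlog
    rw [hh]
    simp only
    linarith [hlog]
  have hTd : HasDerivAt Tf (∑ k, q k * Real.log (q k)) 0 := by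
    rw [hTf]
    apply HasDerivAt.fun_sum
    intro k _
    by_cases hqk : q k = 0
    · have hval : q k * Real.log (q k) = 0 := by rw [hqk]; simp
      rw [hval]
      have hev : (fun θ : ℝ => (q k) ^ ((1-θ)⁻¹:ℝ)) =ᶠ[nhds (0:ℝ)] (fun _ => (0:ℝ)) := by
        filter_upwards [Ioo_mem_nhds (by norm_num : (-1:ℝ) < 0) (by norm_num : (0:ℝ) < 1)] with θ hθ
        rw [hqk, Real.zero_rpow (ne_of_gt (inv_pos.mpr (by linarith [hθ.2])))]
      exact (hasDerivAt_const 0 0).congr_of_eventuallyEq hev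
    · have hqp : 0 < q k := lt_of_le_of_ne (hqnn k) (Ne.symm hqk)
      have hfun : (fun θ : ℝ => (q k) ^ ((1-θ)⁻¹:ℝ))
          = fun θ => Real.exp (Real.log (q k) * (1-θ)⁻¹) := by
        funext θ
        rw [Real.rpow_def_of_pos hqp]
      rw [hfun]
      have h1 : HasDerivAt (fun θ:ℝ => 1-θ) (-1) 0 := by
        exact (hasDerivAt_id (0:ℝ)).const_sub 1
      have h2 : HasDerivAt (fun θ:ℝ => (1-θ)⁻¹) 1 0 := by
        have := h1.inv (by norm_num)
        norm_num at this
        exact this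
      have h3 : HasDerivAt (fun θ:ℝ => Real.log (q k) * (1-θ)⁻¹) (Real.log (q k)) 0 := by
        simpa using h2.const_mul (Real.log (q k))
      have h4 := h3.exp
      norm_num [Real.exp_log hqp] at h4
      convert h4 using 1
  have hSd : HasDerivAt Sf (∑ i, -(p i * Real.log (p i))) 0 := by
    rw [hSf]
    apply HasDerivAt.fun_sum
    intro i _
    by_cases hpk : p i = 0
    · have hval : -(p i * Real.log (p i)) = 0 := by rw [hpk]; simp
      rw [hval]
      have hev : (fun θ : ℝ => (p i) ^ ((1+θ)⁻¹:ℝ)) =ᶠ[nhds (0:ℝ)] (fun _ => (0:ℝ)) := by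
        filter_upwards [Ioo_mem_nhds (by norm_num : (-1:ℝ) < 0) (by norm_num : (0:ℝ) < 1)] with θ hθ
        rw [hpk, Real.zero_rpow (ne_of_gt (inv_pos.mpr (by linarith [hθ.1])))]
      exact (hasDerivAt_const 0 0).congr_of_eventuallyEq hev
    · have hpp : 0 < p i := lt_of_le_of_ne (hpnn i) (Ne.symm hpk)
      have hfun : (fun θ : ℝ => (p i) ^ ((1+θ)⁻¹:ℝ))
          = fun θ => Real.exp (Real.log (p i) * (1+θ)⁻¹) := by
        funext θ
        rw [Real.rpow_def_of_pos hpp]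
      rw [hfun]
      have h1 : HasDerivAt (fun θ:ℝ => 1+θ) 1 0 := by
        exact (hasDerivAt_id (0:ℝ)).const_add 1
      have h2 : HasDerivAt (fun θ:ℝ => (1+θ)⁻¹) (-1) 0 := by
        have := h1.inv (by norm_num)
        norm_num at this
        exact this
      have h3 : HasDerivAt (fun θ:ℝ => Real.log (p i) * (1+θ)⁻¹) (-Real.log (p i)) 0 := by
        have := h2.const_mul (Real.log (p i))
        refine this.congr_deriv ?_
        change Real.log (p i) * -1 = -Real.log (p i)
        ring
      have h4 := h3.exp
      norm_num [Real.exp_log hpp] at h4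
      convert h4 using 1
  have hlnT : HasDerivAt (fun θ => Real.log (Tf θ)) (∑ k, q k * Real.log (q k)) 0 := by
    have := hTd.log (by rw [hT0]; norm_num)
    rw [hT0] at this
    simpa using this
  have hlnS : HasDerivAt (fun θ => Real.log (Sf θ)) (∑ i, -(p i * Real.log (p i))) 0 := by
    have := hSd.log (by rw [hS0]; norm_num)
    rw [hS0] at this
    simpa using this
  have hA : HasDerivAt (fun θ:ℝ => ((1-θ)/2)) (-(1/2):ℝ) 0 := by
    have : HasDerivAt (fun θ:ℝ => 1-θ) (-1) 0 := by
      exact (hasDerivAt_id (0:ℝ)).const_sub 1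
    have := this.div_const 2
    refine this.congr_deriv ?_
    change -1/2 = -(1/2:ℝ)
    norm_num
  have hB : HasDerivAt (fun θ:ℝ => ((1+θ)/2)) ((1/2):ℝ) 0 := by
    have : HasDerivAt (fun θ:ℝ => 1+θ) 1 0 := by
      exact (hasDerivAt_id (0:ℝ)).const_add 1
    have := this.div_const 2
    convert this using 1
  have hD2 : HasDerivAt (fun θ:ℝ => (Real.log d / 2) * θ) (Real.log d / 2) 0 := by
    simpa using (hasDerivAt_id (0:ℝ)).const_mul (Real.log d / 2)
  have hDh := (((hA.mul hlnT)).add hD2).sub (hB.mul hlnS)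
  have hD0 : h 0 = 0 := by
    rw [hh]
    simp only [sub_zero, add_zero, mul_zero, hT0, hS0, Real.log_one]
  have hD := slope_le hDh hD0 hineq
  -- hD : D ≤ 0 with D the combined derivative
  rw [hT0, hS0, Real.log_one] at hD
  have e1 : ∑ k, q k * Real.log (q k) = -∑ k, -(q k * Real.log (q k)) := by
    rw [← Finset.sum_neg_distrib]
    simp
  rw [e1] at hD
  have hpg : ∀ i, p i = ‖w i‖^2 := fun i => rfl
  have hqg : ∀ k, q k = ‖g k‖^2 := fun k => rfl
  simp only [hp, hq, hg] at hD
  linarith [hD]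

lemma mu_logb {d : ℕ} (hd : 1 ≤ d) {V : Matrix (Fin d) (Fin d) ℂ}
    (hV : V ∈ Matrix.unitaryGroup (Fin d) ℂ) (hmod : ∀ k i, ‖V k i‖^2 = 1/(d:ℝ))
    (w : Fin d → ℂ) (hw : ∑ i, ‖w i‖^2 = 1) :
    Real.logb 2 d ≤ (∑ i, nb (‖w i‖^2)) + ∑ k, nb (‖∑ i, V k i * w i‖^2) := by
  have hmain := mu_nat hd hV hmod w hw
  have hl2 : 0 < Real.log 2 := Real.log_pos one_lt_two
  have key : ∀ x:ℝ, nb x * Real.log 2 = -(x * Real.log x) := by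
    intro x
    unfold nb Real.logb
    field_simp
  rw [Real.logb, div_le_iff₀ hl2, add_mul, Finset.sum_mul, Finset.sum_mul]
  simp only [key]
  exact hmain

end Aux

/-- for the ensemble of `2d` equiprobable states `U_t|k⟩` drawn from the
computational basis (`U₀ = 1`) and a conjugate basis, `I_acc ≤ (1/2) log₂ d`. -/
theorem stmt_6 (d : ℕ) (hd : 1 ≤ d) (U : Fin 2 → Matrix (Fin d) (Fin d) ℂ)
    (hunitary : ∀ t, U t ∈ Matrix.unitaryGroup (Fin d) ℂ)
    (hU0 : U 0 = 1)
    (hmub : ∀ i k, ‖U 1 i k‖ ^ 2 = 1 / d) :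
    Iacc (fun _ : Fin d × Fin 2 => 1 / (2 * d))
        (fun kt => outer (fun i => U kt.2 i kt.1)) ≤ (1 / 2) * Real.logb 2 d := by
  classical
  have hd0 : (0:ℝ) < d := by exact_mod_cast Nat.lt_of_lt_of_le Nat.zero_lt_one hd
  have hd1 : (1:ℝ) ≤ (d:ℝ) := by exact_mod_cast hd
  set L := Real.logb 2 d with hL
  have hLnn : 0 ≤ L := Real.logb_nonneg one_lt_two hd1
  apply Real.sSup_le
  swap
  · linarith
  rintro r ⟨J, hJF, M, hPOVM, rfl⟩
  letI : Fintype J := hJF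
  obtain ⟨hMpsd, hMsum⟩ := hPOVM
  set Pj : (Fin d × Fin 2) × J → ℝ :=
    fun ij => 1 / (2 * (d:ℝ)) * ((M ij.2) * outer (fun i => U ij.1.2 i ij.1.1)).trace.re with hPj
  show mi Pj ≤ 1 / 2 * L
  set W : J → Matrix (Fin d) (Fin d) ℂ :=
    fun j => ((hMpsd j).1.eigenvectorUnitary : Matrix (Fin d) (Fin d) ℂ) with hWdef
  set a : J → Fin d → ℝ := fun j m => (hMpsd j).1.eigenvalues m with hadef
  set c : J → Fin d → (Fin d × Fin 2) → ℝ :=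
    fun j m kt => ‖∑ i, (starRingEnd ℂ) (W j i m) * U kt.2 i kt.1‖^2 with hcdef
  have hWmem : ∀ j, W j ∈ Matrix.unitaryGroup (Fin d) ℂ := by
    intro j
    simp only [hWdef]
    exact SetLike.coe_mem _
  have hWu : ∀ j m, ∑ i, ‖W j i m‖^2 = 1 := fun j m =>
    Aux.col_unit (W j) (Matrix.mem_unitaryGroup_iff'.mp (hWmem j)) m
  have K1 : ∀ (j : J) (kt : Fin d × Fin 2),
      ((M j) * outer (fun i => U kt.2 i kt.1)).trace.re = ∑ m, a j m * c j m kt := by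
    intro j kt
    rw [Aux.psd_trace_outer (hMpsd j) (fun i => U kt.2 i kt.1), Complex.ofReal_re]
  have K2 : ∀ j m, 0 ≤ a j m := by
    intro j m
    simp only [hadef]
    exact (hMpsd j).eigenvalues_nonneg m
  have K3 : ∀ kt : Fin d × Fin 2,
      ∑ j, ((M j) * outer (fun i => U kt.2 i kt.1)).trace.re = 1 := by
    intro kt
    have hsum : ∑ j, (M j) * outer (fun i => U kt.2 i kt.1)
        = outer (fun i => U kt.2 i kt.1) := by
      rw [← Finset.sum_mul, hMsum, one_mul]
    have htr : ∑ j, ((M j) * outer (fun i => U kt.2 i kt.1)).trace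
        = (outer (fun i => U kt.2 i kt.1)).trace := by
      rw [← Matrix.trace_sum, hsum]
    have hηtr : (outer (fun i => U kt.2 i kt.1)).trace = ((1:ℝ):ℂ) := by
      rw [Matrix.trace]
      have hdg : ∀ i, (outer (fun i' => U kt.2 i' kt.1)).diag i
          = U kt.2 i kt.1 * (starRingEnd ℂ) (U kt.2 i kt.1) := fun i => rfl
      rw [Finset.sum_congr rfl fun i _ => hdg i,
        Finset.sum_congr rfl fun i _ => Aux.mul_conj'' _, ← Complex.ofReal_sum]
      norm_cast
      exact Aux.col_unit (U kt.2) (Matrix.mem_unitaryGroup_iff'.mp (hunitary kt.2)) kt.1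
    calc ∑ j, ((M j) * outer (fun i => U kt.2 i kt.1)).trace.re
        = (∑ j, ((M j) * outer (fun i => U kt.2 i kt.1)).trace).re := (Complex.re_sum _ _).symm
      _ = 1 := by rw [htr, hηtr, Complex.ofReal_re]
  have K4 : ∀ j m, ∑ kt : Fin d × Fin 2, c j m kt = 2 := by
    intro j m
    rw [Fintype.sum_prod_type_right]
    have hper : ∀ t : Fin 2, ∑ k, c j m (k, t) = 1 := by
      intro t
      have hrow := Aux.sumVrow (U t) (Matrix.mem_unitaryGroup_iff.mp (hunitary t))
        (fun i => W j i m)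
      simp only [hcdef]
      rw [hrow]
      exact hWu j m
    rw [Fin.sum_univ_two, hper 0, hper 1]
    norm_num
  have K5 : ∀ j m, L ≤ (∑ k, Aux.nb (c j m (k, 0))) + ∑ k, Aux.nb (c j m (k, 1)) := by
    intro j m
    have hVmem : star (U 1) ∈ Matrix.unitaryGroup (Fin d) ℂ := Unitary.star_mem (hunitary 1)
    have hVmod : ∀ k i, ‖(star (U 1)) k i‖^2 = 1/(d:ℝ) := by
      intro k i
      rw [Matrix.star_apply, norm_star]
      exact hmub i k
    have hmu := Aux.mu_logb hd hVmem hVmod (fun i => W j i m) (hWu j m)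
    have e0 : ∀ k, c j m (k, 0) = ‖W j k m‖^2 := by
      intro k
      simp only [hcdef]
      have hone : ∑ i, (starRingEnd ℂ) (W j i m) * U 0 i k = (starRingEnd ℂ) (W j k m) := by
        rw [hU0]
        simp [Matrix.one_apply]
      rw [hone, RCLike.norm_conj]
    have e1 : ∀ k, c j m (k, 1) = ‖∑ i, (star (U 1)) k i * W j i m‖^2 := by
      intro k
      simp only [hcdef]
      have hX : (∑ i, (star (U 1)) k i * W j i m)
          = (starRingEnd ℂ) (∑ i, (starRingEnd ℂ) (W j i m) * U 1 i k) := by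
        rw [map_sum]
        refine Finset.sum_congr rfl fun i _ => ?_
        simp [Matrix.star_apply, _root_.map_mul, mul_comm]
      rw [hX, RCLike.norm_conj]
    calc L ≤ (∑ i, Aux.nb (‖W j i m‖^2))
          + ∑ k, Aux.nb (‖∑ i, (star (U 1)) k i * W j i m‖^2) := hmu
      _ = _ := by
          rw [Finset.sum_congr rfl fun k (_ : k ∈ Finset.univ) => (congrArg Aux.nb (e0 k)).symm,
            Finset.sum_congr rfl fun k (_ : k ∈ Finset.univ) => (congrArg Aux.nb (e1 k)).symm]
  -- marginals
  have hmargA : ∀ kt, margA Pj kt = 1/(2*(d:ℝ)) := by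
    intro kt
    unfold margA
    have hv : ∀ j, Pj (kt, j)
        = 1/(2*(d:ℝ)) * ((M j) * outer (fun i => U kt.2 i kt.1)).trace.re := fun j => rfl
    rw [Finset.sum_congr rfl fun j _ => hv j, ← Finset.mul_sum, K3 kt, mul_one]
  have hqB : ∀ j, margB Pj j = (∑ m, a j m) / d := by
    intro j
    unfold margB
    have hv : ∀ kt : Fin d × Fin 2, Pj (kt, j) = 1/(2*(d:ℝ)) * ∑ m, a j m * c j m kt := by
      intro kt
      have : Pj (kt, j)
          = 1/(2*(d:ℝ)) * ((M j) * outer (fun i => U kt.2 i kt.1)).trace.re := rfl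
      rw [this, K1 j kt]
    rw [Finset.sum_congr rfl fun kt _ => hv kt, ← Finset.mul_sum, Finset.sum_comm]
    rw [Finset.sum_congr rfl fun m (_ : m ∈ Finset.univ) => (Finset.mul_sum _ _ _).symm]
    rw [Finset.sum_congr rfl fun m (_ : m ∈ Finset.univ) => by rw [K4 j m]]
    rw [← Finset.sum_mul]
    field_simp
  have hqsum : ∑ j, margB Pj j = 1 := by
    unfold margB
    rw [Finset.sum_comm]
    have : ∀ kt : Fin d × Fin 2, ∑ j, Pj (kt, j) = 1/(2*(d:ℝ)) := fun kt => hmargA kt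
    rw [Finset.sum_congr rfl fun kt _ => this kt, Finset.sum_const]
    simp only [Finset.card_univ, Fintype.card_prod, Fintype.card_fin, nsmul_eq_mul]
    push_cast
    field_simp
  have hnb0 : Aux.nb 0 = 0 := by simp [Aux.nb]
  -- entropy of margA
  have hH2A : H2 (margA Pj) = 1 + L := by
    unfold H2
    have hv : ∀ kt, -(margA Pj kt * Real.logb 2 (margA Pj kt))
        = -(1/(2*(d:ℝ)) * Real.logb 2 (1/(2*(d:ℝ)))) := by
      intro kt
      rw [hmargA kt]
    rw [Finset.sum_congr rfl fun kt _ => hv kt, Finset.sum_const]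
    have hlog : Real.logb 2 (1/(2*(d:ℝ))) = -(1+L) := by
      rw [one_div, Real.logb_inv, Real.logb_mul (two_ne_zero) (ne_of_gt hd0),
        Real.logb_self_eq_one (by norm_num), hL]
    rw [hlog]
    simp only [Finset.card_univ, Fintype.card_prod, Fintype.card_fin, nsmul_eq_mul]
    push_cast
    field_simp
  -- per-outcome inequality
  have star_ineq : ∀ j : J, margB Pj j * (1 + L/2)
      ≤ (∑ kt : Fin d × Fin 2, Aux.nb (Pj (kt, j))) - Aux.nb (margB Pj j) := by
    intro j
    have hAnn : 0 ≤ ∑ m, a j m := Finset.sum_nonneg fun m _ => K2 j m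
    rcases eq_or_lt_of_le hAnn with hA0 | hApos
    · have ham : ∀ m, a j m = 0 := by
        intro m
        exact (Finset.sum_eq_zero_iff_of_nonneg (fun m _ => K2 j m)).mp hA0.symm m
          (Finset.mem_univ m)
      have hPz : ∀ kt : Fin d × Fin 2, Pj (kt, j) = 0 := by
        intro kt
        have hP : Pj (kt, j)
            = 1/(2*(d:ℝ)) * ((M j) * outer (fun i => U kt.2 i kt.1)).trace.re := rfl
        rw [hP, K1 j kt, Finset.sum_congr rfl fun m _ => by rw [ham m, zero_mul]]
        simp
      have hqz : margB Pj j = 0 := by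
        unfold margB
        rw [Finset.sum_congr rfl fun kt _ => hPz kt]
        simp
      rw [hqz, Finset.sum_congr rfl fun kt (_ : kt ∈ Finset.univ) => by rw [hPz kt, hnb0], hnb0]
      simp
    · have hqj : margB Pj j = (∑ m, a j m) / d := hqB j
      have hqpos : 0 < margB Pj j := by
        rw [hqj]
        exact div_pos hApos hd0
      have hrsum0 : ∑ kt : Fin d × Fin 2, Pj (kt, j) = margB Pj j := rfl
      have hPr : ∀ kt : Fin d × Fin 2, Pj (kt, j) = (margB Pj j) * (Pj (kt, j) / margB Pj j) := by
        intro kt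
        field_simp
      have hrsum : ∑ kt : Fin d × Fin 2, Pj (kt, j) / margB Pj j = 1 := by
        rw [← Finset.sum_div, hrsum0, div_self (ne_of_gt hqpos)]
      have hsplit : ∑ kt : Fin d × Fin 2, Aux.nb (Pj (kt, j))
          = Aux.nb (margB Pj j)
            + (margB Pj j) * ∑ kt : Fin d × Fin 2, Aux.nb (Pj (kt, j) / margB Pj j) := by
        rw [Finset.sum_congr rfl fun kt (_ : kt ∈ Finset.univ) => by
          rw [hPr kt, Aux.nb_mul]]
        rw [Finset.sum_add_distrib, ← Finset.sum_mul, hrsum, one_mul, ← Finset.mul_sum]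
      have hmain : 1 + L/2 ≤ ∑ kt : Fin d × Fin 2, Aux.nb (Pj (kt, j) / margB Pj j) := by
        have hlnn : ∀ m, 0 ≤ a j m / ((d:ℝ) * margB Pj j) :=
          fun m => div_nonneg (K2 j m) (mul_nonneg hd0.le hqpos.le)
        have hlsum : ∑ m, a j m / ((d:ℝ) * margB Pj j) = 1 := by
          rw [← Finset.sum_div, hqj]
          field_simp
        have hrm : ∀ kt : Fin d × Fin 2, Pj (kt, j) / margB Pj j
            = ∑ m, (a j m / ((d:ℝ) * margB Pj j)) * (c j m kt / 2) := by
          intro kt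
          have hP : Pj (kt, j) = 1/(2*(d:ℝ)) * ∑ m, a j m * c j m kt := by
            have : Pj (kt, j)
                = 1/(2*(d:ℝ)) * ((M j) * outer (fun i => U kt.2 i kt.1)).trace.re := rfl
            rw [this, K1 j kt]
          rw [hP, Finset.mul_sum, Finset.sum_div]
          refine Finset.sum_congr rfl fun m _ => ?_
          field_simp [ne_of_gt hd0, ne_of_gt hqpos]
          try exact Or.inl trivial
        have hcnn : ∀ m kt, 0 ≤ c j m kt := by
          intro m kt
          simp only [hcdef]
          positivity
        have hJensen : ∀ kt : Fin d × Fin 2,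
            ∑ m, (a j m / ((d:ℝ) * margB Pj j)) * Aux.nb (c j m kt / 2)
              ≤ Aux.nb (Pj (kt, j) / margB Pj j) := by
          intro kt
          rw [hrm kt]
          have hjen := Aux.nb_concave.le_map_sum (t := Finset.univ)
            (w := fun m => a j m / ((d:ℝ) * margB Pj j))
            (p := fun m => c j m kt / 2)
            (fun m _ => hlnn m) hlsum
            (fun m _ => Set.mem_Ici.mpr (by positivity))
          simpa [smul_eq_mul] using hjen
        have hperm : ∀ m, (1 + L/2) ≤ ∑ kt : Fin d × Fin 2, Aux.nb (c j m kt / 2) := by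
          intro m
          rw [Finset.sum_congr rfl fun kt (_ : kt ∈ Finset.univ) => Aux.nb_half (c j m kt)]
          rw [Finset.sum_add_distrib]
          have h2 : ∑ kt : Fin d × Fin 2, c j m kt / 2 = 1 := by
            rw [← Finset.sum_div, K4 j m]
            norm_num
          have h1 : L / 2 ≤ ∑ kt : Fin d × Fin 2, Aux.nb (c j m kt) / 2 := by
            rw [← Finset.sum_div]
            have hK : L ≤ ∑ kt : Fin d × Fin 2, Aux.nb (c j m kt) := by
              rw [Fintype.sum_prod_type_right, Fin.sum_univ_two]
              exact K5 j m
            linarith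
          linarith
        have step1 : ∑ m, (a j m / ((d:ℝ) * margB Pj j)) * (1 + L/2)
            ≤ ∑ m, (a j m / ((d:ℝ) * margB Pj j)) * ∑ kt : Fin d × Fin 2, Aux.nb (c j m kt / 2) :=
          Finset.sum_le_sum fun m _ => mul_le_mul_of_nonneg_left (hperm m) (hlnn m)
        have step2 : ∑ m, (a j m / ((d:ℝ) * margB Pj j)) * ∑ kt : Fin d × Fin 2, Aux.nb (c j m kt / 2)
            = ∑ kt : Fin d × Fin 2, ∑ m, (a j m / ((d:ℝ) * margB Pj j)) * Aux.nb (c j m kt / 2) := by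
          rw [Finset.sum_congr rfl fun m (_ : m ∈ Finset.univ) => Finset.mul_sum _ _ _]
          rw [Finset.sum_comm]
        have step3 : ∑ kt : Fin d × Fin 2, ∑ m, (a j m / ((d:ℝ) * margB Pj j)) * Aux.nb (c j m kt / 2)
            ≤ ∑ kt : Fin d × Fin 2, Aux.nb (Pj (kt, j) / margB Pj j) :=
          Finset.sum_le_sum fun kt _ => hJensen kt
        have hfirst : ∑ m, (a j m / ((d:ℝ) * margB Pj j)) * (1 + L/2) = 1 + L/2 := by
          rw [← Finset.sum_mul, hlsum, one_mul]
        linarith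
      calc margB Pj j * (1 + L/2)
          ≤ margB Pj j * ∑ kt : Fin d × Fin 2, Aux.nb (Pj (kt, j) / margB Pj j) :=
            mul_le_mul_of_nonneg_left hmain hqpos.le
        _ = (Aux.nb (margB Pj j)
              + (margB Pj j) * ∑ kt : Fin d × Fin 2, Aux.nb (Pj (kt, j) / margB Pj j))
            - Aux.nb (margB Pj j) := by ring
        _ = _ := by rw [← hsplit]
  -- sum over j
  have hsum_star : (1 + L/2)
      ≤ (∑ j, ∑ kt : Fin d × Fin 2, Aux.nb (Pj (kt, j))) - ∑ j, Aux.nb (margB Pj j) := by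
    have hs := Finset.sum_le_sum (fun j (_ : j ∈ Finset.univ) => star_ineq j)
    rw [← Finset.sum_mul, hqsum, one_mul, Finset.sum_sub_distrib] at hs
    exact hs
  have hH2P : H2 Pj = ∑ j, ∑ kt : Fin d × Fin 2, Aux.nb (Pj (kt, j)) := by
    unfold H2
    rw [Fintype.sum_prod_type_right]
    rfl
  have hH2B : H2 (margB Pj) = ∑ j, Aux.nb (margB Pj j) := rfl
  show H2 (margA Pj) + H2 (margB Pj) - H2 Pj ≤ 1 / 2 * L
  rw [hH2A, hH2P, hH2B]
  linarith


end
end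

section
/- Let d be a prime power and suppose there exist d+1 mutually unbiased bases of ℂ^d with basis-change unitaries U_0 = I, U_1, …, U_d. For the ensemble of (d+1)d equiprobable states {U_t|k⟩}, the accessible information satisfies I_acc ≤ 1 − log₂(1 + 1/d). In particular I_acc ≤ 1. -/
open scoped BigOperators Classical ComplexOrder
open Matrix Kronecker

noncomputable section

lemma aux_log_collision {α : Type} [Fintype α] (q : α → ℝ)
    (h0 : ∀ i, 0 ≤ q i) (h1 : ∑ i, q i = 1) :
    ∑ i, q i * Real.log (q i) ≤ Real.log (∑ i, q i ^ 2) := by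
  set c := ∑ i, q i ^ 2 with hc
  have hcpos : 0 < c := by
    by_contra h
    push_neg at h
    have hz : ∀ i, q i = 0 := by
      intro i
      have h2 : ∀ j ∈ Finset.univ, 0 ≤ q j ^ 2 := fun j _ => sq_nonneg _
      nlinarith [sq_nonneg (q i), Finset.single_le_sum h2 (Finset.mem_univ i)]
    simp [hz] at h1
  have key : ∀ i, q i * Real.log (q i) ≤ q i * Real.log c + (q i ^ 2 / c - q i) := by
    intro i
    rcases eq_or_lt_of_le (h0 i) with h | h
    · simp [← h]
    · have hdiv : 0 < q i / c := div_pos h hcpos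
      have hlog := Real.log_le_sub_one_of_pos hdiv
      rw [Real.log_div (ne_of_gt h) (ne_of_gt hcpos)] at hlog
      have h2 : q i * (Real.log (q i) - Real.log c) ≤ q i * (q i / c - 1) :=
        mul_le_mul_of_nonneg_left hlog (le_of_lt h)
      have h3 : q i * (q i / c) = q i ^ 2 / c := by ring
      nlinarith
  calc ∑ i, q i * Real.log (q i) ≤ ∑ i, (q i * Real.log c + (q i ^ 2 / c - q i)) :=
        Finset.sum_le_sum (fun i _ => key i)
    _ = (∑ i, q i) * Real.log c + ((∑ i, q i ^ 2) / c - ∑ i, q i) := by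
        rw [Finset.sum_add_distrib, Finset.sum_sub_distrib, ← Finset.sum_mul, ← Finset.sum_div]
    _ = Real.log c := by rw [h1, ← hc]; field_simp; ring

lemma aux_trace_mul_outer {n : Type} [Fintype n] (M : Matrix n n ℂ) (u : n → ℂ) :
    (M * outer u).trace = star u ⬝ᵥ (M *ᵥ u) := by
  simp only [Matrix.trace, Matrix.diag, Matrix.mul_apply, outer, Matrix.of_apply,
    dotProduct, Matrix.mulVec, Pi.star_apply]
  congr 1; ext c
  rw [Finset.mul_sum]
  congr 1; ext b
  ring

lemma aux_trace_outer_mul_outer {n : Type} [Fintype n] (u w : n → ℂ) :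
    (outer u * outer w).trace = (star u ⬝ᵥ w) * star (star u ⬝ᵥ w) := by
  have h : star (star u ⬝ᵥ w) = star w ⬝ᵥ u := by
    simp [dotProduct, star_sum, mul_comm]
  rw [h]
  simp only [Matrix.trace, Matrix.diag, Matrix.mul_apply, outer, Matrix.of_apply, dotProduct,
    Pi.star_apply]
  rw [Finset.sum_mul_sum, Finset.sum_comm]
  congr 1; ext c; congr 1; ext b
  ring

lemma aux_frob_nonneg {n : Type} [Fintype n] (E : Matrix n n ℂ) :
    0 ≤ ((Eᴴ * E).trace).re := by
  simp only [Matrix.trace, Matrix.diag, Matrix.mul_apply, Matrix.conjTranspose_apply,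
    Complex.re_sum]
  refine Finset.sum_nonneg fun c _ => Finset.sum_nonneg fun b _ => ?_
  rw [show star (E b c) * E b c = ((‖E b c‖:ℂ))^2 by
    rw [← Complex.conj_mul' (E b c)]; rfl]
  rw [← Complex.ofReal_pow, Complex.ofReal_re]
  positivity

lemma aux_trace_sq_le {n : Type} [Fintype n] [DecidableEq n] {M : Matrix n n ℂ}
    (hM : M.PosSemidef) : ((M * M).trace).re ≤ ((M.trace).re) ^ 2 := by
  open scoped MatrixOrder in obtain ⟨B, hB⟩ := CStarAlgebra.nonneg_iff_eq_star_mul_self.mp hM.nonneg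
  rw [Matrix.star_eq_conjTranspose] at hB
  subst hB
  set r : n → ℝ := fun b => ∑ c, ‖B b c‖ ^ 2 with hr
  have htr : ((Bᴴ * B).trace).re = ∑ b, r b := by
    simp only [Matrix.trace, Matrix.diag, Matrix.mul_apply, Matrix.conjTranspose_apply,
      Complex.re_sum, hr]
    rw [Finset.sum_comm]
    congr 1; ext b; congr 1; ext c
    rw [show star (B b c) * B b c = ((‖B b c‖:ℂ))^2 by rw [← Complex.conj_mul' (B b c)]; rfl]
    rw [← Complex.ofReal_pow, Complex.ofReal_re]
  set C := B * Bᴴ with hC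
  have hcyc : (Bᴴ * B * (Bᴴ * B)).trace = (C * C).trace := by
    calc (Bᴴ * B * (Bᴴ * B)).trace = (Bᴴ * (B * Bᴴ * B)).trace := by
          simp only [Matrix.mul_assoc]
      _ = ((B * Bᴴ * B) * Bᴴ).trace := Matrix.trace_mul_comm _ _
      _ = (C * C).trace := by simp only [hC, Matrix.mul_assoc]
  have hCH : ∀ i j, C j i = star (C i j) := by
    intro i j
    simp [hC, Matrix.mul_apply, star_sum, mul_comm]
  have htr2 : ((C * C).trace).re = ∑ i, ∑ j, ‖C i j‖ ^ 2 := by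
    simp only [Matrix.trace, Matrix.diag, Matrix.mul_apply, Complex.re_sum]
    congr 1; ext i; congr 1; ext j
    rw [hCH i j, show C i j * star (C i j) = ((‖C i j‖:ℂ))^2 by
      rw [← Complex.mul_conj' (C i j)]; rfl]
    rw [← Complex.ofReal_pow, Complex.ofReal_re]
  have hCS : ∀ i j, ‖C i j‖ ^ 2 ≤ r i * r j := by
    intro i j
    have h1 : ‖C i j‖ ≤ ∑ k, ‖B i k‖ * ‖B j k‖ := by
      show ‖(B * Bᴴ) i j‖ ≤ _
      rw [Matrix.mul_apply]
      refine le_trans (norm_sum_le _ _) (Finset.sum_le_sum fun k _ => le_of_eq ?_)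
      simp [Matrix.conjTranspose_apply, norm_mul, RCLike.norm_conj]
    have h2 : (∑ k, ‖B i k‖ * ‖B j k‖) ^ 2 ≤ (∑ k, ‖B i k‖ ^ 2) * ∑ k, ‖B j k‖ ^ 2 :=
      Finset.sum_mul_sq_le_sq_mul_sq _ _ _
    calc ‖C i j‖ ^ 2 ≤ (∑ k, ‖B i k‖ * ‖B j k‖) ^ 2 :=
          pow_le_pow_left₀ (norm_nonneg _) h1 2
      _ ≤ r i * r j := h2
  calc ((Bᴴ * B * (Bᴴ * B)).trace).re = ∑ i, ∑ j, ‖C i j‖ ^ 2 := by rw [hcyc]; exact htr2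
    _ ≤ ∑ i, ∑ j, r i * r j :=
        Finset.sum_le_sum fun i _ => Finset.sum_le_sum fun j _ => hCS i j
    _ = (∑ b, r b) ^ 2 := by rw [← Finset.sum_mul_sum]; ring
    _ = (((Bᴴ * B).trace).re) ^ 2 := by rw [htr]

set_option maxHeartbeats 2000000 in
lemma aux_core (d : ℕ) (hd : 0 < d)
    (U : Fin (d + 1) → Matrix (Fin d) (Fin d) ℂ)
    (hunitary : ∀ t, U t ∈ Matrix.unitaryGroup (Fin d) ℂ)
    (hmub : ∀ s t, s ≠ t → ∀ i k, ‖((U s)ᴴ * U t) i k‖ ^ 2 = 1 / d)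
    (M : Matrix (Fin d) (Fin d) ℂ) (hM : M.PosSemidef) :
    ∑ i : Fin d × Fin (d + 1), (((M * outer (fun x => U i.2 x i.1)).trace).re) ^ 2
      ≤ 2 * ((M.trace).re) ^ 2 := by
  set v : Fin d × Fin (d + 1) → Fin d → ℂ := fun i x => U i.2 x i.1 with hv
  set P : Fin d × Fin (d + 1) → Matrix (Fin d) (Fin d) ℂ := fun i => outer (v i) with hP
  set m : ℝ := (M.trace).re with hm
  set a : Fin d × Fin (d + 1) → ℝ := fun i => ((M * P i).trace).re with ha
  have hd1 : (0:ℝ) < (d:ℝ) + 1 := by positivity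
  have hdR : (0:ℝ) < (d:ℝ) := by exact_mod_cast hd
  -- unitarity facts
  have hUU : ∀ t, (U t)ᴴ * U t = 1 := by
    intro t
    have := (Matrix.mem_unitaryGroup_iff'.mp (hunitary t))
    simpa [Matrix.star_eq_conjTranspose] using this
  have hUU' : ∀ t, U t * (U t)ᴴ = 1 := by
    intro t
    have := (Matrix.mem_unitaryGroup_iff.mp (hunitary t))
    simpa [Matrix.star_eq_conjTranspose] using this
  -- dot products of the columns
  have hdot : ∀ i i', star (v i) ⬝ᵥ v i' = ((U i.2)ᴴ * U i'.2) i.1 i'.1 := by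
    intro i i'
    simp [dotProduct, Matrix.mul_apply, Matrix.conjTranspose_apply, hv]
  -- trace of M * P i is real nonneg
  have htrMP : ∀ i, (M * P i).trace = ((a i : ℝ) : ℂ) ∧ 0 ≤ a i := by
    intro i
    have h0 : 0 ≤ star (v i) ⬝ᵥ (M *ᵥ v i) := hM.dotProduct_mulVec_nonneg (v i)
    rw [← aux_trace_mul_outer] at h0
    rw [Complex.le_def] at h0
    constructor
    · apply Complex.ext <;> simp [ha, hP, ← h0.2]
    · simpa [ha] using h0.1
  -- Gram matrix real parts
  have hG : ∀ i i', ((P i * P i').trace).re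
      = (if i = i' then 1 else 0) + 1 / (d:ℝ) - (if i.2 = i'.2 then 1 / (d:ℝ) else 0) := by
    intro i i'
    rw [hP]
    rw [aux_trace_outer_mul_outer, Complex.star_def, Complex.mul_conj, hdot]
    by_cases ht : i.2 = i'.2
    · by_cases hii : i = i'
      · subst hii
        rw [hUU]
        simp [Matrix.one_apply, Complex.normSq_eq_norm_sq]
      · have hk : i.1 ≠ i'.1 := by
          intro hk; exact hii (Prod.ext hk ht)
        rw [ht, hUU]
        simp [Matrix.one_apply, hk, hii, ht]
    · have := hmub i.2 i'.2 ht i.1 i'.1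
      have h2 : Complex.normSq (((U i.2)ᴴ * U i'.2) i.1 i'.1) = 1 / (d:ℝ) := by
        rw [Complex.normSq_eq_norm_sq]
        exact_mod_cast this
      have hne : ¬ i = i' := fun h => ht (by rw [h])
      simp [h2, ht, hne]
  -- sum of projectors within a basis
  have hPsum : ∀ t, ∑ k, P (k, t) = 1 := by
    intro t
    ext x y
    rw [Matrix.sum_apply]
    have : ∑ k, P (k, t) x y = (U t * (U t)ᴴ) x y := by
      simp [hP, outer, Matrix.mul_apply, Matrix.conjTranspose_apply, hv]
    rw [this, hUU' t]
  -- row sums of a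
  have hsum_a : ∀ t, ∑ k, a (k, t) = m := by
    intro t
    have h1 : ∑ k, (M * P (k, t)).trace = M.trace := by
      rw [← Matrix.trace_sum, ← Finset.mul_sum, hPsum t, mul_one]
    have h2 := congrArg Complex.re h1
    rw [Complex.re_sum] at h2
    simpa [ha, hm] using h2
  have hsum_a' : ∑ i, a i = ((d:ℝ) + 1) * m := by
    rw [Fintype.sum_prod_type_right]
    simp only [hsum_a, Finset.sum_const, Finset.card_univ, Fintype.card_fin, nsmul_eq_mul]
    push_cast
    ring
  -- the Bessel coefficients
  set c : Fin d × Fin (d + 1) → ℝ := fun i => a i - m / ((d:ℝ) + 1) with hc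
  have hsum_c : ∀ t, ∑ k, c (k, t) = m / ((d:ℝ) + 1) := by
    intro t
    rw [hc]
    rw [Finset.sum_sub_distrib, hsum_a t]
    simp only [Finset.sum_const, Finset.card_univ, Fintype.card_fin, nsmul_eq_mul]
    field_simp
    ring
  have hsum_c' : ∑ i, c i = m := by
    rw [Fintype.sum_prod_type_right]
    simp only [hsum_c, Finset.sum_const, Finset.card_univ, Fintype.card_fin, nsmul_eq_mul]
    push_cast
    field_simp
  set S : Matrix (Fin d) (Fin d) ℂ := ∑ i, ((c i : ℝ) : ℂ) • P i with hS
  set E : Matrix (Fin d) (Fin d) ℂ := M - S with hE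
  have hPH : ∀ i, (P i)ᴴ = P i := by
    intro i
    ext x y
    simp [hP, outer, Matrix.conjTranspose_apply, mul_comm]
  have hEH : Eᴴ = E := by
    rw [hE, Matrix.conjTranspose_sub, hM.1, hS, Matrix.conjTranspose_sum]
    congr 1
    congr 1
    ext i
    rw [Matrix.conjTranspose_smul, hPH i]
    congr 1
    simp [Complex.star_def, Complex.conj_ofReal]
  -- trace computations
  have htrMS : (M * S).trace.re = ∑ i, c i * a i := by
    rw [hS, Finset.mul_sum]
    rw [Matrix.trace_sum, Complex.re_sum]
    congr 1; ext i
    rw [mul_smul_comm, Matrix.trace_smul, smul_eq_mul, (htrMP i).1, ← Complex.ofReal_mul,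
      Complex.ofReal_re]
  have htrSS : (S * S).trace.re = ∑ i, ∑ i', (c i * c i') * ((P i * P i').trace).re := by
    rw [hS, Finset.sum_mul_sum]
    rw [Matrix.trace_sum, Complex.re_sum]
    congr 1; ext i
    rw [Matrix.trace_sum, Complex.re_sum]
    congr 1; ext i'
    rw [smul_mul_assoc, mul_smul_comm, Matrix.trace_smul, Matrix.trace_smul, smul_eq_mul,
      smul_eq_mul, ← mul_assoc, ← Complex.ofReal_mul]
    rw [Complex.re_ofReal_mul]
  have hbessel : 0 ≤ (M * M).trace.re - 2 * (∑ i, c i * a i)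
      + ∑ i, ∑ i', (c i * c i') * ((P i * P i').trace).re := by
    have h0 := aux_frob_nonneg E
    rw [hEH] at h0
    have hEE : E * E = M * M - M * S - S * M + S * S := by
      rw [hE]; noncomm_ring
    rw [hEE, Matrix.trace_add, Matrix.trace_sub, Matrix.trace_sub,
      Matrix.trace_mul_comm S M] at h0
    simp only [Complex.add_re, Complex.sub_re] at h0
    rw [htrMS, htrSS] at h0
    linarith
  -- evaluate the Gram sum
  set D : ℝ := (d:ℝ) + 1 with hD
  have hDne : D ≠ 0 := ne_of_gt hd1
  have hdne : (d:ℝ) ≠ 0 := ne_of_gt hdR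
  have h3 : ∑ i : Fin d × Fin (d+1), ∑ i' : Fin d × Fin (d+1),
      (if i.2 = i'.2 then c i * c i' * (1/(d:ℝ)) else 0)
      = ∑ t, ((∑ k, c (k,t)) * (∑ l, c (l,t)) * (1/(d:ℝ))) := by
    simp_rw [Fintype.sum_prod_type]
    have step : ∀ (k : Fin d) (t : Fin (d+1)) (l : Fin d),
        (∑ s, if t = s then c (k,t) * c (l,s) * (1/(d:ℝ)) else 0)
          = c (k,t) * c (l,t) * (1/(d:ℝ)) := by
      intro k t l
      rw [Finset.sum_ite_eq]
      simp
    calc ∑ k, ∑ t, ∑ l, ∑ s, (if t = s then c (k,t) * c (l,s) * (1/(d:ℝ)) else 0)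
        = ∑ k, ∑ t, ∑ l, c (k,t) * c (l,t) * (1/(d:ℝ)) := by
          congr 1; ext k; congr 1; ext t; congr 1; ext l; exact step k t l
      _ = ∑ t, ∑ k, ∑ l, c (k,t) * c (l,t) * (1/(d:ℝ)) := Finset.sum_comm
      _ = ∑ t, ((∑ k, c (k,t)) * (∑ l, c (l,t)) * (1/(d:ℝ))) := by
          congr 1; ext t
          rw [Finset.sum_mul_sum]
          rw [Finset.sum_mul]
          congr 1; ext k
          rw [Finset.sum_mul]
  have hR : (∑ i, ∑ i', (c i * c i') * ((P i * P i').trace).re)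
      = ∑ i, c i ^ 2 + (∑ i, c i) * (∑ i, c i) * (1/(d:ℝ))
        - ∑ t, ((∑ k, c (k,t)) * (∑ l, c (l,t)) * (1/(d:ℝ))) := by
    rw [← h3]
    have h1 : ∀ i i' : Fin d × Fin (d+1), (c i * c i') * ((P i * P i').trace).re
        = (if i = i' then c i * c i' else 0) + c i * c i' * (1/(d:ℝ))
          - (if i.2 = i'.2 then c i * c i' * (1/(d:ℝ)) else 0) := by
      intro i i'
      rw [hG i i']
      by_cases h : i = i'
      · subst h; simp
      · by_cases h2 : i.2 = i'.2 <;> simp [h, h2] <;> ring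
    calc ∑ i, ∑ i', (c i * c i') * ((P i * P i').trace).re
        = ∑ i, ∑ i', ((if i = i' then c i * c i' else 0) + c i * c i' * (1/(d:ℝ))
            - (if i.2 = i'.2 then c i * c i' * (1/(d:ℝ)) else 0)) := by
          congr 1; ext i; congr 1; ext i'; exact h1 i i'
      _ = ∑ i, ((∑ i', if i = i' then c i * c i' else 0)
            + (∑ i', c i * c i' * (1/(d:ℝ)))
            - ∑ i', (if i.2 = i'.2 then c i * c i' * (1/(d:ℝ)) else 0)) := by
          congr 1; ext i
          rw [Finset.sum_sub_distrib, Finset.sum_add_distrib]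
      _ = _ := by
          rw [Finset.sum_sub_distrib, Finset.sum_add_distrib]
          have e1 : ∑ i : Fin d × Fin (d+1), (∑ i', if i = i' then c i * c i' else 0)
              = ∑ i, c i ^ 2 := by
            refine Finset.sum_congr rfl fun i _ => ?_
            rw [Finset.sum_ite_eq]
            simp [sq]
          have e2 : ∑ i : Fin d × Fin (d+1), ∑ i', c i * c i' * (1/(d:ℝ))
              = (∑ i, c i) * (∑ i, c i) * (1/(d:ℝ)) := by
            rw [Finset.sum_mul_sum]
            rw [Finset.sum_mul]
            refine Finset.sum_congr rfl fun i _ => ?_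
            rw [Finset.sum_mul]
          rw [e1, e2]
  -- combine
  have hQ : ∑ i, c i ^ 2 ≤ (M * M).trace.re - m ^ 2 / D := by
    have hca : ∑ i, c i * a i = ∑ i, c i ^ 2 + (m / D) * m := by
      have : ∀ i, c i * a i = c i ^ 2 + (m / D) * c i := by
        intro i
        rw [hc]
        push_cast
        ring
      rw [Finset.sum_congr rfl (fun i _ => this i), Finset.sum_add_distrib, ← Finset.mul_sum,
        hsum_c']
    have hcross : ∑ t, ((∑ k, c (k,t)) * (∑ l, c (l,t)) * (1/(d:ℝ)))
        = D * ((m/D) * (m/D) * (1/(d:ℝ))) := by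
      rw [Finset.sum_congr rfl (fun t _ => by rw [hsum_c t])]
      simp only [Finset.sum_const, Finset.card_univ, Fintype.card_fin, nsmul_eq_mul, hD]
      push_cast
      ring
    rw [hR, hsum_c', hcross] at hbessel
    rw [hca] at hbessel
    have hid : m * m * (1/(d:ℝ)) - D * ((m/D) * (m/D) * (1/(d:ℝ))) = m ^ 2 / D := by
      field_simp
      ring
    have hid2 : m / D * m = m ^ 2 / D := by ring
    linarith [hbessel, hid, hid2]
  -- final accounting
  have hfin : ∑ i, a i ^ 2 = ∑ i, c i ^ 2 + 2 * (m / D) * m + ((d:ℝ) * D) * (m / D)^2 := by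
    have hterm : ∀ i, a i ^ 2 = c i ^ 2 + 2 * (m / D) * c i + (m / D)^2 := by
      intro i
      rw [hc]
      push_cast
      ring
    rw [Finset.sum_congr rfl (fun i _ => hterm i), Finset.sum_add_distrib,
      Finset.sum_add_distrib, ← Finset.mul_sum, hsum_c', Finset.sum_const]
    simp only [Finset.card_univ, Fintype.card_prod, Fintype.card_fin, nsmul_eq_mul]
    push_cast
    ring
  have hA : ((M * M).trace).re ≤ m ^ 2 := aux_trace_sq_le hM
  set w : ℝ := m / D with hw
  have hmw : m = D * w := by rw [hw]; field_simp
  have hgoal : ∑ i : Fin d × Fin (d+1), (((M * outer (fun x => U i.2 x i.1)).trace).re) ^ 2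
      = ∑ i, a i ^ 2 := by
    simp only [ha, hP, hv]
  rw [hgoal, hfin]
  have hQ' : ∑ i, c i ^ 2 ≤ m ^ 2 - m ^ 2 / D := by linarith
  have hms : m ^ 2 / D = D * w ^ 2 := by rw [hmw]; field_simp
  rw [hms] at hQ'
  rw [hmw] at hQ' ⊢
  nlinarith [hQ', hD, sq_nonneg w]

/-- entropy of a conditional slice, lower bound via collision probability. -/
lemma aux_slice {α : Type} [Fintype α] (f : α → ℝ) (P C : ℝ) (hP : 0 < P)
    (hf0 : ∀ i, 0 ≤ f i) (hf1 : ∑ i, f i = P)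
    (hcol : ∑ i, (f i / P) ^ 2 ≤ Real.exp (-C * Real.log 2))
    : -(P * Real.logb 2 P) + P * C ≤ ∑ i, -(f i * Real.logb 2 (f i)) := by
  set q : α → ℝ := fun i => f i / P with hq
  have hq0 : ∀ i, 0 ≤ q i := fun i => div_nonneg (hf0 i) hP.le
  have hq1 : ∑ i, q i = 1 := by
    rw [hq, ← Finset.sum_div, hf1, div_self (ne_of_gt hP)]
  have hfi : ∀ i, f i = P * q i := by
    intro i; rw [hq]; field_simp
  have hterm : ∀ i, -(f i * Real.logb 2 (f i))
      = -(q i * (P * Real.logb 2 P)) + P * (-(q i * Real.logb 2 (q i))) := by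
    intro i
    rcases eq_or_lt_of_le (hq0 i) with h | h
    · rw [hfi i, ← h]; simp
    · rw [hfi i, Real.logb, Real.logb, Real.logb,
        Real.log_mul (ne_of_gt hP) (ne_of_gt h)]
      field_simp
      ring
  rw [Finset.sum_congr rfl (fun i _ => hterm i), Finset.sum_add_distrib]
  have e1 : ∑ i, -(q i * (P * Real.logb 2 P)) = -(P * Real.logb 2 P) := by
    rw [Finset.sum_neg_distrib, ← Finset.sum_mul, hq1, one_mul]
  have e2 : ∑ i, P * (-(q i * Real.logb 2 (q i))) = P * ∑ i, -(q i * Real.logb 2 (q i)) := by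
    rw [Finset.mul_sum]
  rw [e1, e2]
  have hq2pos : 0 < ∑ i, q i ^ 2 := by
    by_contra h
    push_neg at h
    have hz : ∀ i, q i = 0 := by
      intro i
      have h2 : ∀ j ∈ Finset.univ, 0 ≤ q j ^ 2 := fun j _ => sq_nonneg _
      nlinarith [sq_nonneg (q i), Finset.single_le_sum h2 (Finset.mem_univ i)]
    simp [hz] at hq1
  have hent : C ≤ ∑ i, -(q i * Real.logb 2 (q i)) := by
    have h1 : ∑ i, q i * Real.log (q i) ≤ Real.log (∑ i, q i ^ 2) :=
      aux_log_collision q hq0 hq1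
    have h2 : Real.log (∑ i, q i ^ 2) ≤ -C * Real.log 2 := by
      calc Real.log (∑ i, q i ^ 2) ≤ Real.log (Real.exp (-C * Real.log 2)) :=
            Real.log_le_log hq2pos hcol
        _ = -C * Real.log 2 := Real.log_exp _
    have hlog2 : (0:ℝ) < Real.log 2 := Real.log_pos one_lt_two
    have h3 : ∑ i, q i * Real.logb 2 (q i) ≤ -C := by
      have : ∑ i, q i * Real.logb 2 (q i) = (∑ i, q i * Real.log (q i)) / Real.log 2 := by
        rw [Finset.sum_div]
        refine Finset.sum_congr rfl fun i _ => ?_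
        rw [Real.logb]
        ring
      rw [this]
      rw [div_le_iff₀ hlog2]
      calc ∑ i, q i * Real.log (q i) ≤ -C * Real.log 2 := le_trans h1 h2
        _ = -C * Real.log 2 := rfl
    have : ∑ i, -(q i * Real.logb 2 (q i)) = -(∑ i, q i * Real.logb 2 (q i)) := by
      rw [Finset.sum_neg_distrib]
    rw [this]
    linarith
  nlinarith [hent, hP]

set_option maxHeartbeats 1000000 in
/-- for the ensemble of `(d+1)d` equiprobable states drawn from a full set
of `d+1` mutually unbiased bases (`d` a prime power), `I_acc ≤ 1 − log₂(1 + 1/d) ≤ 1`. -/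
theorem stmt_15 (d : ℕ) (hd : IsPrimePow d)
    (U : Fin (d + 1) → Matrix (Fin d) (Fin d) ℂ)
    (hunitary : ∀ t, U t ∈ Matrix.unitaryGroup (Fin d) ℂ)
    (hU0 : U 0 = 1)
    (hmub : ∀ s t, s ≠ t → ∀ i k, ‖((U s)ᴴ * U t) i k‖ ^ 2 = 1 / d) :
    Iacc (fun _ : Fin d × Fin (d + 1) => 1 / ((d + 1) * d))
        (fun kt => outer (fun i => U kt.2 i kt.1)) ≤ 1 - Real.logb 2 (1 + 1 / d) ∧
    Iacc (fun _ : Fin d × Fin (d + 1) => 1 / ((d + 1) * d))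
        (fun kt => outer (fun i => U kt.2 i kt.1)) ≤ 1 := by
  have hd0 : 0 < d := hd.pos
  have hdR : (0:ℝ) < (d:ℝ) := by exact_mod_cast hd0
  have hd1 : (0:ℝ) < (d:ℝ) + 1 := by positivity
  have hdinv : (0:ℝ) < 1 + 1/(d:ℝ) := by positivity
  have hlog1 : Real.logb 2 (1 + 1/(d:ℝ)) = Real.logb 2 ((d:ℝ)+1) - Real.logb 2 (d:ℝ) := by
    have h : (1:ℝ) + 1/(d:ℝ) = ((d:ℝ)+1)/(d:ℝ) := by field_simp
    rw [h, Real.logb_div (ne_of_gt hd1) (ne_of_gt hdR)]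
  have hlognn : 0 ≤ Real.logb 2 (1 + 1/(d:ℝ)) := Real.logb_nonneg one_lt_two (by
    have h : (0:ℝ) < 1/(d:ℝ) := by positivity
    linarith)
  have hbound : (0:ℝ) ≤ 1 - Real.logb 2 (1 + 1/(d:ℝ)) := by
    have h2 : Real.logb 2 (1 + 1/(d:ℝ)) ≤ 1 := by
      have h12 : (1:ℝ) + 1/(d:ℝ) ≤ 2 := by
        have : 1/(d:ℝ) ≤ 1 := by
          rw [div_le_one hdR]
          exact_mod_cast hd0
        linarith
      calc Real.logb 2 (1 + 1/(d:ℝ)) ≤ Real.logb 2 2 :=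
            Real.logb_le_logb_of_le one_lt_two hdinv h12
        _ = 1 := by
          simp [Real.logb_self_eq_one]
    linarith
  have key : Iacc (fun _ : Fin d × Fin (d + 1) => 1 / (((d:ℝ) + 1) * d))
      (fun kt => outer (fun i => U kt.2 i kt.1)) ≤ 1 - Real.logb 2 (1 + 1/(d:ℝ)) := by
    apply Real.sSup_le _ hbound
    rintro r ⟨J, hJ, M, hPOVM, rfl⟩
    letI : Fintype J := hJ
    set N : ℝ := ((d:ℝ) + 1) * (d:ℝ) with hN
    have hN0 : (0:ℝ) < N := by positivity
    set C : ℝ := 2 * Real.logb 2 ((d:ℝ) + 1) - 1 with hC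
    set v : Fin d × Fin (d+1) → Fin d → ℂ := fun i x => U i.2 x i.1 with hv
    set p : (Fin d × Fin (d+1)) × J → ℝ :=
      fun ij => (1 / (((d:ℝ) + 1) * (d:ℝ))) * ((M ij.2 * outer (v ij.1)).trace).re with hp
    have hgoal : mi (fun ij : (Fin d × Fin (d+1)) × J =>
        (fun _ : Fin d × Fin (d + 1) => 1 / (((d:ℝ) + 1) * (d:ℝ))) ij.1 *
          ((M ij.2) * ((fun kt : Fin d × Fin (d+1) => outer (fun i => U kt.2 i kt.1)) ij.1)).trace.re)
        = mi p := rfl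
    rw [hgoal]
    have hMps : ∀ j, (M j).PosSemidef := hPOVM.1
    have hMsum : ∑ j, M j = 1 := hPOVM.2
    set m : J → ℝ := fun j => ((M j).trace).re with hm
    set a : Fin d × Fin (d+1) → J → ℝ := fun i j => ((M j * outer (v i)).trace).re with ha
    have htr : ∀ i j, (M j * outer (v i)).trace = ((a i j : ℝ) : ℂ) ∧ 0 ≤ a i j := by
      intro i j
      have h0 : 0 ≤ star (v i) ⬝ᵥ (M j *ᵥ v i) := (hMps j).dotProduct_mulVec_nonneg (v i)
      rw [← aux_trace_mul_outer] at h0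
      rw [Complex.le_def] at h0
      constructor
      · apply Complex.ext <;> simp [ha, ← h0.2]
      · simpa [ha] using h0.1
    have hp0 : ∀ x, 0 ≤ p x := by
      intro x
      rw [hp]
      have := (htr x.1 x.2).2
      positivity
    have hUU : ∀ t, (U t)ᴴ * U t = 1 := by
      intro t
      simpa [Matrix.star_eq_conjTranspose] using (Matrix.mem_unitaryGroup_iff'.mp (hunitary t))
    have hUU' : ∀ t, U t * (U t)ᴴ = 1 := by
      intro t
      simpa [Matrix.star_eq_conjTranspose] using (Matrix.mem_unitaryGroup_iff.mp (hunitary t))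
    have htrP : ∀ i, (outer (v i)).trace = 1 := by
      intro i
      have h1 : (outer (v i)).trace = ((1 : Matrix (Fin d) (Fin d) ℂ) * outer (v i)).trace := by
        rw [one_mul]
      rw [h1, aux_trace_mul_outer, Matrix.one_mulVec]
      have h2 : star (v i) ⬝ᵥ v i = ((U i.2)ᴴ * U i.2) i.1 i.1 := by
        simp [dotProduct, Matrix.mul_apply, Matrix.conjTranspose_apply, hv]
      rw [h2, hUU, Matrix.one_apply_eq]
    have hPsum : ∀ t, ∑ k, outer (v (k, t)) = 1 := by
      intro t
      ext x y
      rw [Matrix.sum_apply]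
      have h1 : ∑ k, outer (v (k, t)) x y = (U t * (U t)ᴴ) x y := by
        simp [outer, Matrix.mul_apply, Matrix.conjTranspose_apply, hv]
      rw [h1, hUU' t]
    have hPsumAll : ∑ i : Fin d × Fin (d+1), outer (v i)
        = (((d:ℝ) + 1 : ℝ) : ℂ) • (1 : Matrix (Fin d) (Fin d) ℂ) := by
      rw [Fintype.sum_prod_type_right]
      rw [Finset.sum_congr rfl (fun t _ => hPsum t)]
      simp only [Finset.sum_const, Finset.card_univ, Fintype.card_fin]
      push_cast
      simp [← Nat.cast_smul_eq_nsmul ℂ]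
    -- marginal on labels is uniform
    have hmA : ∀ i, margA p i = 1 / N := by
      intro i
      have h1 : ∑ j, (M j * outer (v i)).trace = ((1 : Matrix (Fin d) (Fin d) ℂ) * outer (v i)).trace := by
        rw [← Matrix.trace_sum, ← Finset.sum_mul, hMsum]
      rw [one_mul, htrP i] at h1
      have h2 : ∑ j, a i j = 1 := by
        have := congrArg Complex.re h1
        rw [Complex.re_sum] at this
        simpa [ha] using this
      show ∑ j, p (i, j) = 1 / N
      rw [Finset.sum_congr rfl (fun j _ => by rw [hp]), ← Finset.mul_sum]
      rw [show (∑ j, ((M j * outer (v i)).trace).re) = ∑ j, a i j from rfl, h2, hN]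
      ring
    -- marginal on outcomes
    have hmB : ∀ j, margB p j = m j / (d:ℝ) := by
      intro j
      have h1 : ∑ i : Fin d × Fin (d+1), (M j * outer (v i)).trace
          = (((d:ℝ) + 1 : ℝ) : ℂ) * (M j).trace := by
        rw [← Matrix.trace_sum, ← Finset.mul_sum, hPsumAll, mul_smul_comm, mul_one,
          Matrix.trace_smul]
        simp [smul_eq_mul]
      have h2 : ∑ i : Fin d × Fin (d+1), a i j = ((d:ℝ) + 1) * m j := by
        have := congrArg Complex.re h1
        rw [Complex.re_sum] at this
        simpa [ha, hm, Complex.re_ofReal_mul] using this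
      show ∑ i : Fin d × Fin (d+1), p (i, j) = m j / (d:ℝ)
      rw [Finset.sum_congr rfl (fun i _ => by rw [hp]), ← Finset.mul_sum]
      rw [show (∑ i : Fin d × Fin (d+1), ((M j * outer (v i)).trace).re)
          = ∑ i : Fin d × Fin (d+1), a i j from rfl, h2]
      field_simp
    have hm0 : ∀ j, 0 ≤ m j := by
      intro j
      have h1 : 0 ≤ margB p j := Finset.sum_nonneg fun i _ => hp0 (i, j)
      rw [hmB j] at h1
      have h2 : m j = (m j / (d:ℝ)) * (d:ℝ) := by field_simp
      rw [h2]
      exact mul_nonneg h1 hdR.le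
    -- entropy of the uniform marginal
    have hHA : H2 (margA p) = Real.logb 2 N := by
      rw [H2]
      rw [Finset.sum_congr rfl (fun i _ => by rw [hmA i])]
      rw [Finset.sum_const]
      simp only [Finset.card_univ, Fintype.card_prod, Fintype.card_fin, nsmul_eq_mul]
      rw [one_div, Real.logb_inv]
      have hcard : ((d * (d + 1) : ℕ) : ℝ) = N := by push_cast; rw [hN]; ring
      rw [hcard]
      field_simp
    -- the exponential form of the collision bound
    have hlog2pos : (0:ℝ) < Real.log 2 := Real.log_pos one_lt_two
    have hexp : Real.exp (-C * Real.log 2) = 2 / ((d:ℝ) + 1) ^ 2 := by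
      have h1 : -C * Real.log 2 = Real.log 2 - 2 * Real.log ((d:ℝ) + 1) := by
        rw [hC, Real.logb]
        field_simp
        ring
      have h2 : Real.log 2 - 2 * Real.log ((d:ℝ) + 1) = Real.log (2 / ((d:ℝ) + 1) ^ 2) := by
        rw [Real.log_div (by norm_num) (by positivity), Real.log_pow]
        push_cast
        ring
      rw [h1, h2, Real.exp_log (by positivity)]
    -- per-outcome entropy bound
    have hslice : ∀ j : J, -(margB p j * Real.logb 2 (margB p j)) + margB p j * C
        ≤ ∑ i : Fin d × Fin (d+1), -(p (i, j) * Real.logb 2 (p (i, j))) := by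
      intro j
      have hBnn : 0 ≤ margB p j := Finset.sum_nonneg fun i _ => hp0 (i, j)
      rcases eq_or_lt_of_le hBnn with h | h
      · have hz : ∀ i ∈ (Finset.univ : Finset (Fin d × Fin (d+1))), p (i, j) = 0 :=
          (Finset.sum_eq_zero_iff_of_nonneg (fun i _ => hp0 (i, j))).mp h.symm
        have hz' : ∀ i : Fin d × Fin (d+1), p (i, j) = 0 := fun i => hz i (Finset.mem_univ i)
        rw [← h]
        simp [hz']
      · have hmj : 0 < m j := by
          rw [hmB j] at h
          by_contra hcon
          push_neg at hcon
          nlinarith [div_nonpos_of_nonpos_of_nonneg hcon hdR.le]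
        refine aux_slice (fun i => p (i, j)) (margB p j) C h (fun i => hp0 (i, j)) rfl ?_
        rw [hexp]
        have hptoa : ∀ i : Fin d × Fin (d+1), p (i, j) / margB p j
            = a i j / (((d:ℝ) + 1) * m j) := by
          intro i
          rw [hp, hmB j]
          simp only
          rw [show (M j * outer (v i)).trace.re = a i j from rfl]
          field_simp
        rw [Finset.sum_congr rfl (fun i _ => by rw [hptoa i])]
        have hcore : ∑ i : Fin d × Fin (d+1), (a i j) ^ 2 ≤ 2 * (m j) ^ 2 := by
          have := aux_core d hd0 U hunitary hmub (M j) (hMps j)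
          simpa [ha, hv, hm] using this
        have hKpos : (0:ℝ) < (((d:ℝ) + 1) * m j) ^ 2 := by positivity
        calc ∑ i : Fin d × Fin (d+1), (a i j / (((d:ℝ) + 1) * m j)) ^ 2
            = (∑ i : Fin d × Fin (d+1), (a i j) ^ 2) / (((d:ℝ) + 1) * m j) ^ 2 := by
              rw [Finset.sum_div]
              exact Finset.sum_congr rfl fun i _ => by rw [div_pow]
          _ ≤ (2 * (m j) ^ 2) / (((d:ℝ) + 1) * m j) ^ 2 := by
              gcongr
          _ = 2 / ((d:ℝ) + 1) ^ 2 := by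
              field_simp
    have hsumB : ∑ j, margB p j = 1 := by
      have h1 : ∑ j, margB p j = ∑ j, ∑ i : Fin d × Fin (d+1), p (i, j) := rfl
      calc ∑ j, margB p j = ∑ i : Fin d × Fin (d+1), ∑ j, p (i, j) := by
            rw [h1, Finset.sum_comm]
        _ = ∑ _i : Fin d × Fin (d+1), 1 / N := Finset.sum_congr rfl (fun i _ => hmA i)
        _ = 1 := by
            rw [Finset.sum_const]
            simp only [Finset.card_univ, Fintype.card_prod, Fintype.card_fin, nsmul_eq_mul]
            have hcard : ((d * (d + 1) : ℕ) : ℝ) = N := by push_cast; rw [hN]; ring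
            rw [hcard]
            field_simp
    have hH2p : H2 (margB p) + C ≤ H2 p := by
      have h1 : H2 p = ∑ j, ∑ i : Fin d × Fin (d+1), -(p (i, j) * Real.logb 2 (p (i, j))) := by
        rw [H2, Fintype.sum_prod_type_right]
      have h2 : H2 (margB p) + C
          = ∑ j, (-(margB p j * Real.logb 2 (margB p j)) + margB p j * C) := by
        rw [Finset.sum_add_distrib, ← Finset.sum_mul, hsumB, one_mul, H2]
      rw [h1, h2]
      exact Finset.sum_le_sum fun j _ => hslice j
    have hmi : mi p ≤ Real.logb 2 N - C := by
      rw [mi, hHA]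
      linarith [hH2p]
    have hfinal : Real.logb 2 N - C = 1 - Real.logb 2 (1 + 1/(d:ℝ)) := by
      rw [hN, hC, Real.logb_mul (ne_of_gt hd1) (ne_of_gt hdR), hlog1]
      ring
    linarith [hmi, hfinal]
  exact ⟨key, le_trans key (by linarith)⟩


end
end
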